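/- arXiv:1705.03192 — 9 statements merged into one kernel-verified Lean document; each statement's English description precedes it below -/
import Mathlib

section
/- With the chain λ₀ = D, λ_{i−1} = β_i λ_i + λ_{i+1} (λ_{l+1} = 0) associated to integers K > D ≥ 1, the column intervals C₀ = [0, β₀λ₀−1] (empty if β₀ = 0), C_i = [K−D−λ_{2i−1}, K−D−λ_{2i+1}−1] for 1 ≤ i ≤ ⌈l/2⌉−1, and C_{⌈l/2⌉} = [K−D−λ_{2⌈l/2⌉−1}, K−D−1] form a partition of [0, K−D−1]. -/
/-- The pair (λ_{i-1}, λ_i) of the Euclidean chain, with λ_{-1} = K - D and λ₀ = D. -/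
def lamPair (K D : ℕ) : ℕ → ℕ × ℕ
  | 0 => (K - D, D)
  | i + 1 =>
    let p := lamPair K D i
    (p.2, if p.2 = 0 then 0 else p.1 % p.2)

/-- λ_i of the Euclidean chain. -/
def lam (K D i : ℕ) : ℕ := (lamPair K D i).2

/-- λ_{i-1} of the Euclidean chain (so `lamS K D 0 = K - D`). -/
def lamS (K D i : ℕ) : ℕ := (lamPair K D i).1

/-- β_i = λ_{i-1} / λ_i of the Euclidean chain. -/
def beta (K D i : ℕ) : ℕ := (lamPair K D i).1 / (lamPair K D i).2

/-!
Put `a₀ = 0` and `aᵢ = (K − D) − λ_{2i−1}` for `i ≥ 1`. Since the chain `λ` is decreasing, `a` is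
monotone, and `C_i = [aᵢ, a_{i+1})`: for `i = 0` this is the division `K − D = β₀λ₀ + λ₁`, and at
the top `λ_{2⌈l/2⌉+1} = 0` gives `a_{⌈l/2⌉+1} = K − D`. Consecutive intervals cut out by a monotone
sequence are pairwise disjoint and telescope to `[a₀, a_{⌈l/2⌉+1}) = [0, K − D)`.
-/

namespace Monotone

variable {β : Type*} [LinearOrder β] [LocallyFiniteOrder β] {a : ℕ → β}

theorem disjoint_finset_Ico_succ (ha : Monotone a) {i j : ℕ} (hij : i ≠ j) :
    Disjoint (Finset.Ico (a i) (a (i + 1))) (Finset.Ico (a j) (a (j + 1))) := by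
  rw [← Finset.disjoint_coe, Finset.coe_Ico, Finset.coe_Ico]
  simpa using ha.pairwise_disjoint_on_Ico_succ hij

theorem biUnion_range_finset_Ico_succ (ha : Monotone a) (n : ℕ) :
    (Finset.range n).biUnion (fun i => Finset.Ico (a i) (a (i + 1))) = Finset.Ico (a 0) (a n) := by
  induction n with
  | zero => simp
  | succ n ih =>
    rw [Finset.range_add_one, Finset.biUnion_insert, ih, Finset.union_comm,
      Finset.Ico_union_Ico_eq_Ico (ha n.zero_le) (ha n.le_succ)]

end Monotone

section EuclideanChain

variable {K D : ℕ}

theorem lam_succ_le (K D i : ℕ) : lam K D (i + 1) ≤ lam K D i := by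
  change (if lam K D i = 0 then 0 else lamS K D i % lam K D i) ≤ lam K D i
  split_ifs with h
  · exact Nat.zero_le _
  · exact (Nat.mod_lt _ (Nat.pos_of_ne_zero h)).le

theorem lam_antitone (K D : ℕ) : Antitone (lam K D) :=
  antitone_nat_of_succ_le (lam_succ_le K D)

theorem beta_zero_mul_lam_zero (hD : 0 < D) :
    beta K D 0 * lam K D 0 = K - D - lam K D 1 := by
  change (K - D) / D * D = K - D - (if D = 0 then 0 else (K - D) % D)
  rw [if_neg hD.ne']
  have := Nat.div_add_mod' (K - D) D
  omega

def columnStart (K D i : ℕ) : ℕ :=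
  if i = 0 then 0 else K - D - lam K D (2 * i - 1)

theorem columnStart_succ (K D i : ℕ) : columnStart K D (i + 1) = K - D - lam K D (2 * i + 1) := by
  rw [columnStart, if_neg i.succ_ne_zero, show 2 * (i + 1) - 1 = 2 * i + 1 by omega]

theorem columnStart_monotone (K D : ℕ) : Monotone (columnStart K D) := by
  refine monotone_nat_of_le_succ fun i => ?_
  rw [columnStart_succ]
  rcases Nat.eq_zero_or_pos i with rfl | hi
  · exact Nat.zero_le _
  · rw [columnStart, if_neg hi.ne']
    exact Nat.sub_le_sub_left (lam_antitone K D (by omega)) _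

theorem columnStart_eq_of_lam_eq_zero {l : ℕ} (hl : lam K D (l + 1) = 0) :
    columnStart K D ((l + 1) / 2 + 1) = K - D := by
  have hzero : lam K D (2 * ((l + 1) / 2) + 1) = 0 :=
    Nat.eq_zero_of_le_zero (hl ▸ lam_antitone K D (by omega))
  rw [columnStart_succ, hzero, Nat.sub_zero]

end EuclideanChain

theorem stmt4_general (K D l : ℕ) (hD : 0 < D)
    (hl : lam K D (l + 1) = 0)
    (C : ℕ → Finset ℕ)
    (hC : C = fun i =>
      if i = 0 then Finset.Ico 0 (beta K D 0 * lam K D 0)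
      else if i < (l + 1) / 2 then
        Finset.Ico (K - D - lam K D (2 * i - 1)) (K - D - lam K D (2 * i + 1))
      else Finset.Ico (K - D - lam K D (2 * ((l + 1) / 2) - 1)) (K - D)) :
    (∀ i ∈ Finset.range ((l + 1) / 2 + 1), ∀ j ∈ Finset.range ((l + 1) / 2 + 1), i ≠ j →
      Disjoint (C i) (C j)) ∧
    (Finset.range ((l + 1) / 2 + 1)).biUnion C = Finset.range (K - D) := by
  set m := (l + 1) / 2
  set a := columnStart K D
  have ha : Monotone a := columnStart_monotone K D
  have ha_top : a (m + 1) = K - D := columnStart_eq_of_lam_eq_zero hl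
  have hC_eq : ∀ i ∈ Finset.range (m + 1), C i = Finset.Ico (a i) (a (i + 1)) := by
    intro i hi
    rw [Finset.mem_range] at hi
    subst hC
    rcases Nat.eq_zero_or_pos i with rfl | hi0
    · simp [a, columnStart_succ, beta_zero_mul_lam_zero hD, columnStart]
    · have hai : a i = K - D - lam K D (2 * i - 1) := if_neg hi0.ne'
      by_cases him : i < m
      · simp [hi0.ne', him, hai, a, columnStart_succ]
      · obtain rfl : i = m := by omega
        simp [hi0.ne', hai, ha_top]
  refine ⟨fun i hi j hj hij => ?_, ?_⟩
  · rw [hC_eq i hi, hC_eq j hj]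
    exact ha.disjoint_finset_Ico_succ hij
  · rw [Finset.biUnion_congr rfl hC_eq, ha.biUnion_range_finset_Ico_succ, ha_top,
      Finset.range_eq_Ico]
    rfl

/-- The column intervals C₀, …, C_{⌈l/2⌉} of the AIR matrix partition [0, K−D−1]. -/
theorem stmt4 (K D l : ℕ) (hD : 0 < D) (hDK : D < K)
    (hl : lam K D (l + 1) = 0) (hmin : ∀ j ≤ l, lam K D j ≠ 0)
    (C : ℕ → Finset ℕ)
    (hC : C = fun i =>
      if i = 0 then Finset.Ico 0 (beta K D 0 * lam K D 0)
      else if i < (l + 1) / 2 then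
        Finset.Ico (K - D - lam K D (2 * i - 1)) (K - D - lam K D (2 * i + 1))
      else Finset.Ico (K - D - lam K D (2 * ((l + 1) / 2) - 1)) (K - D)) :
    (∀ i ∈ Finset.range ((l + 1) / 2 + 1), ∀ j ∈ Finset.range ((l + 1) / 2 + 1), i ≠ j →
      Disjoint (C i) (C j)) ∧
    (Finset.range ((l + 1) / 2 + 1)).biUnion C = Finset.range (K - D) :=
  stmt4_general K D l hD hl C hC
end

section
/- Let L be the (K,D) AIR matrix and let k ∈ C_i for some i ∈ [0, ⌈l/2⌉]. Write k mod (K−D−λ_{2i−1}) = cλ_{2i} + d with 0 ≤ d < λ_{2i}. Then the down-distance of the diagonal entry L(k,k) equals D + λ_{2i+1} + (β_{2i} − 1 − c)λ_{2i}. -/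
/-- Entry (j,k) of the AIR matrix of size K × n (n = K - D), as a Boolean. -/
def airEntry : ℕ → ℕ → ℕ → ℕ → Bool
  | K, n, j, k =>
    if h : n = 0 ∨ K ≤ n then decide (j = k)
    else
      if j < K - K % n then decide (j % n = k % n)
      else
        if k < n - n % (K % n) then decide (k % (K % n) = j - (K - K % n))
        else airEntry (K % n) (n % (K % n)) (j - (K - K % n)) (k - (n - n % (K % n)))
  termination_by K n _ _ => K
  decreasing_by
    push_neg at h
    exact lt_trans (Nat.mod_lt _ (Nat.pos_of_ne_zero h.1)) h.2

/-- down-distance of the diagonal entry L(k,k) of the K × n AIR matrix. -/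
noncomputable def ddown (K n k : ℕ) : ℕ :=
  sSup {t : ℕ | 0 < t ∧ k + t < K ∧ airEntry K n (k + t) k = true}

/-- up-distance of the entry L(j,k) of the K × n AIR matrix. -/
noncomputable def dup (K n j k : ℕ) : ℕ :=
  j - sSup {j' : ℕ | j' < j ∧ airEntry K n j' k = true}

/-- right-distance of the entry L(j,k) of the K × n AIR matrix. -/
noncomputable def dright (K n j k : ℕ) : ℕ :=
  sInf {t : ℕ | 0 < t ∧ k + t < n ∧ airEntry K n j (k + t) = true}


/-! The lowest 1 of column `k` of the `K × n` AIR matrix (`n = K - D`, `r = K mod n`) lies in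
its bottom `r × n` block. Every pass through the recursion `(K, n) ↦ (r, n mod r)` advances the
Euclidean chain of `(n, r)` by two steps, so if `(a, b)` is its `2i`-th pair, a column `k` with
`n - a ≤ k < n - a mod b` reaches a transposed-identity block after `i` passes, and there its
only 1 sits in row `K - b + (k - (n - a)) mod b`. The chain of `(n, r)` is the chain `λ`
(shifted by two steps when `D > n`; when `D = n` the matrix is two stacked identities), and the
down-distance, that row minus `k`, is rearranged using `a = ⌊a / b⌋ b + a mod b`. -/

def euclidStep (p : ℕ × ℕ) : ℕ × ℕ := (p.2, if p.2 = 0 then 0 else p.1 % p.2)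

namespace euclidStep

lemma snd_le_fst (p : ℕ × ℕ) : (euclidStep p).2 ≤ (euclidStep p).1 := by
  unfold euclidStep
  split_ifs with h
  · exact Nat.zero_le _
  · exact (Nat.mod_lt _ (Nat.pos_of_ne_zero h)).le

lemma snd_iterate_le (m : ℕ) (p : ℕ × ℕ) : (euclidStep^[m] p).2 ≤ p.2 := by
  induction m generalizing p with
  | zero => exact le_rfl
  | succ m ih => exact (ih _).trans (snd_le_fst p)

lemma fst_iterate_le {p : ℕ × ℕ} (hp : p.2 ≤ p.1) (m : ℕ) :
    (euclidStep^[m] p).1 ≤ p.1 := by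
  induction m generalizing p with
  | zero => exact le_rfl
  | succ m ih => exact (ih (snd_le_fst p)).trans hp

lemma snd_iterate_le_fst {p : ℕ × ℕ} (hp : p.2 ≤ p.1) (m : ℕ) :
    (euclidStep^[m] p).2 ≤ (euclidStep^[m] p).1 := by
  cases m with
  | zero => exact hp
  | succ m => rw [Function.iterate_succ_apply']; exact snd_le_fst _

lemma two_mul_fst_iterate_add_two_le {p : ℕ × ℕ} (hp : p.2 ≤ p.1) (m : ℕ) :
    2 * (euclidStep^[m + 2] p).1 ≤ p.1 := by
  have hfst : (euclidStep^[m + 2] p).1 ≤ (euclidStep^[2] p).1 := by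
    rw [Function.iterate_add_apply]
    exact fst_iterate_le (snd_iterate_le_fst hp 2) m
  have htwo : 2 * (euclidStep^[2] p).1 ≤ p.1 := by
    obtain ⟨x, y⟩ := p
    dsimp only at hp
    show 2 * (if y = 0 then 0 else x % y) ≤ x
    split_ifs with hy
    · exact Nat.zero_le _
    · have hlt := Nat.mod_lt x (Nat.pos_of_ne_zero hy)
      have hle : x % y ≤ x - y := Nat.mod_eq_sub_mod hp ▸ Nat.mod_le (x - y) y
      omega
  omega

lemma iterate_two_of_lt {n D : ℕ} (hn : 0 < n) (h : n < D) :
    euclidStep^[2] (n, D) = (n, D % n) := by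
  simp [euclidStep, Nat.mod_eq_of_lt h, hn.ne', (hn.trans h).ne']

end euclidStep

lemma lamPair_eq_iterate (K D j : ℕ) : lamPair K D j = euclidStep^[j] (K - D, D) := by
  induction j with
  | zero => rfl
  | succ j ih => rw [Function.iterate_succ_apply', ← ih]; rfl

lemma isGreatest_add_of_isGreatest {T S : Set ℕ} {N m : ℕ} (hm : IsGreatest S m)
    (hT : ∀ j ∈ T, N ≤ j → j - N ∈ S) (hS : ∀ s ∈ S, N + s ∈ T) :
    IsGreatest T (N + m) := by
  refine ⟨hS m hm.1, fun j hj => ?_⟩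
  by_cases hNj : N ≤ j
  · have := hm.2 (hT j hj hNj)
    omega
  · omega

lemma mod_add_mul_add_mul_eq_of_mul_add_lt {a b c d : ℕ} (h : c * b + d < a - a % b) :
    a % b + (a / b - 1 - c) * b + c * b + b = a := by
  have hdiv := Nat.div_add_mod a b
  have hc : c < a / b := by
    by_contra! hc
    have := Nat.mul_le_mul_right b hc
    rw [mul_comm] at hdiv
    omega
  obtain ⟨s, hs⟩ := Nat.exists_eq_add_of_lt hc
  rw [hs, show c + s + 1 - 1 - c = s by omega]
  rw [hs, show b * (c + s + 1) = c * b + s * b + b by ring] at hdiv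
  omega

section AIR

variable {K n j k : ℕ}

def columnOnes (K n k : ℕ) : Set ℕ := {j | j < K ∧ airEntry K n j k = true}

lemma airEntry_of_lt (hn : 0 < n) (hnK : n < K) (hj : j < K - K % n) :
    airEntry K n j k = decide (j % n = k % n) := by
  rw [airEntry, dif_neg (by omega), if_pos hj]

lemma airEntry_of_lt_sub_mod (hn : 0 < n) (hnK : n < K) (hj : K - K % n ≤ j)
    (hk : k < n - n % (K % n)) :
    airEntry K n j k = decide (k % (K % n) = j - (K - K % n)) := by
  rw [airEntry, dif_neg (by omega), if_neg (by omega), if_pos hk]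

lemma airEntry_of_sub_mod_le (hn : 0 < n) (hnK : n < K) (hj : K - K % n ≤ j)
    (hk : n - n % (K % n) ≤ k) :
    airEntry K n j k =
      airEntry (K % n) (n % (K % n)) (j - (K - K % n)) (k - (n - n % (K % n))) := by
  rw [airEntry, dif_neg (by omega), if_neg (by omega), if_neg (by omega)]

lemma isGreatest_columnOnes_of_mod_eq_zero (hn : 0 < n) (hnK : n < K) (hK : K % n = 0)
    (hk : k < n) : IsGreatest (columnOnes K n k) (K - n + k) := by
  have hdvd : (K - n) % n = 0 := by rw [← Nat.mod_eq_sub_mod hnK.le, hK]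
  refine isGreatest_add_of_isGreatest (S := {k}) (isGreatest_singleton) ?_ ?_
  · rintro j ⟨hjK, hj⟩ hNj
    rw [airEntry_of_lt hn hnK (by omega), decide_eq_true_iff, Nat.mod_eq_of_lt hk] at hj
    have : (K - n + (j - (K - n))) % n = j - (K - n) := by
      rw [Nat.add_mod, hdvd, zero_add, Nat.mod_mod, Nat.mod_eq_of_lt (by omega)]
    rw [Set.mem_singleton_iff, ← this, Nat.add_sub_cancel' hNj, hj]
  · rintro s rfl
    refine ⟨by omega, ?_⟩
    rw [airEntry_of_lt hn hnK (by omega), decide_eq_true_iff, Nat.add_mod, hdvd, zero_add,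
      Nat.mod_mod]

lemma isGreatest_columnOnes_of_lt_sub_mod (hn : 0 < n) (hnK : n < K) (hr : K % n ≠ 0)
    (hk : k < n - n % (K % n)) : IsGreatest (columnOnes K n k) (K - K % n + k % (K % n)) := by
  have hKn : K % n ≤ K := Nat.mod_le K n
  refine isGreatest_add_of_isGreatest (S := {k % (K % n)}) isGreatest_singleton ?_ ?_
  · rintro j ⟨-, hj⟩ hNj
    rw [airEntry_of_lt_sub_mod hn hnK hNj hk, decide_eq_true_iff] at hj
    exact hj.symm
  · rintro s rfl
    refine ⟨by have := Nat.mod_lt k (Nat.pos_of_ne_zero hr); omega, ?_⟩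
    rw [airEntry_of_lt_sub_mod hn hnK (by omega) hk, decide_eq_true_iff, Nat.add_sub_cancel_left]

lemma isGreatest_columnOnes_of_sub_mod_le {m : ℕ} (hn : 0 < n) (hnK : n < K)
    (hk : n - n % (K % n) ≤ k)
    (hm : IsGreatest (columnOnes (K % n) (n % (K % n)) (k - (n - n % (K % n)))) m) :
    IsGreatest (columnOnes K n k) (K - K % n + m) := by
  have hKn : K % n ≤ K := Nat.mod_le K n
  refine isGreatest_add_of_isGreatest hm ?_ ?_
  · rintro j ⟨hjK, hj⟩ hNj
    rw [airEntry_of_sub_mod_le hn hnK hNj hk] at hj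
    exact ⟨by omega, hj⟩
  · rintro s ⟨hs, hse⟩
    refine ⟨by omega, ?_⟩
    rw [airEntry_of_sub_mod_le hn hnK (by omega) hk, Nat.add_sub_cancel_left]
    exact hse

theorem isGreatest_columnOnes {i a b : ℕ} (hn : 0 < n) (hnK : n < K)
    (hab : euclidStep^[2 * i] (n, K % n) = (a, b)) (hb : 0 < b) (hka : n - a ≤ k)
    (hk : k < n - a % b) : IsGreatest (columnOnes K n k) (K - b + (k - (n - a)) % b) := by
  induction i generalizing K n k with
  | zero =>
    obtain ⟨rfl, rfl⟩ := Prod.mk.inj hab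
    rw [Nat.sub_self, Nat.sub_zero]
    exact isGreatest_columnOnes_of_lt_sub_mod hn hnK hb.ne' hk
  | succ i ih =>
    rw [show 2 * (i + 1) = 2 * i + 2 by ring, Function.iterate_add_apply] at hab
    have h2 : 0 < (euclidStep^[2] (n, K % n)).2 := by
      have := euclidStep.snd_iterate_le (2 * i) (euclidStep^[2] (n, K % n))
      rw [hab] at this
      omega
    have hr : K % n ≠ 0 := fun h => by simp [euclidStep, h] at h2
    have hr' : n % (K % n) ≠ 0 := fun h => by simp [euclidStep, hr, h] at h2
    have hstep : euclidStep^[2] (n, K % n) = (n % (K % n), K % n % (n % (K % n))) := by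
      simp [euclidStep, hr, hr']
    rw [hstep] at hab
    have hsorted : K % n % (n % (K % n)) ≤ n % (K % n) :=
      (Nat.mod_lt _ (Nat.pos_of_ne_zero hr')).le
    have hba : b ≤ a := by
      simpa only [hab] using euclidStep.snd_iterate_le_fst (p := (_, _)) hsorted (2 * i)
    have har' : a ≤ n % (K % n) := by
      simpa only [hab] using euclidStep.fst_iterate_le (p := (_, _)) hsorted (2 * i)
    have hr'r : n % (K % n) < K % n := Nat.mod_lt n (Nat.pos_of_ne_zero hr)
    have hrn : K % n < n := Nat.mod_lt K hn
    have hmodb : a % b ≤ a := Nat.mod_le a b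
    have hsub := ih (k := k - (n - n % (K % n))) (Nat.pos_of_ne_zero hr') hr'r hab (by omega)
      (by omega)
    rw [show k - (n - n % (K % n)) - (n % (K % n) - a) = k - (n - a) by omega] at hsub
    have hrow : K - b + (k - (n - a)) % b = K - K % n + (K % n - b + (k - (n - a)) % b) := by
      have := Nat.mod_lt (k - (n - a)) hb
      have := Nat.mod_le K n
      omega
    rw [hrow]
    exact isGreatest_columnOnes_of_sub_mod_le hn hnK (by omega) hsub

lemma ddown_eq_of_isGreatest {K n k R : ℕ} (hR : IsGreatest (columnOnes K n k) R) (hkR : k < R) :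
    ddown K n k = R - k := by
  refine IsGreatest.csSup_eq
    ⟨⟨by omega, by rw [Nat.add_sub_cancel' hkR.le]; exact hR.1⟩, ?_⟩
  rintro t ⟨-, htK, ht⟩
  have := hR.2 ⟨htK, ht⟩
  omega

theorem ddown_eq_of_iterate_euclidStep {K n i k a b c d : ℕ} (hn : 0 < n) (hnK : n < K)
    (hab : euclidStep^[2 * i] (n, K % n) = (a, b)) (hka : n - a ≤ k) (hk : k < n - a % b)
    (hcd : k % (n - a) = c * b + d) (hd : d < b) :
    ddown K n k = K - n + a % b + (a / b - 1 - c) * b := by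
  have hb : 0 < b := by omega
  have hR := isGreatest_columnOnes hn hnK hab hb hka hk
  have ha : a = n ∨ 2 * a ≤ n := by
    rcases i with _ | i
    · exact Or.inl (congrArg Prod.fst hab).symm
    · have := euclidStep.two_mul_fst_iterate_add_two_le (p := (n, K % n))
        (Nat.mod_lt K hn).le (2 * i)
      rw [← show 2 * (i + 1) = 2 * i + 2 by ring, hab] at this
      exact Or.inr this
  have han : a ≤ n := by
    have := euclidStep.fst_iterate_le (p := (n, K % n)) (Nat.mod_lt K hn).le (2 * i)
    rwa [hab] at this
  -- for `i = 0` the modulus `n - a` is `0`, and `k % 0 = k`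
  have hmod : k % (n - a) = k - (n - a) := by
    rcases ha with rfl | ha
    · simp
    · rw [Nat.mod_eq_sub_mod hka, Nat.mod_eq_of_lt (by omega)]
  rw [hmod] at hcd
  have hrow : (k - (n - a)) % b = d := by rw [hcd, Nat.mul_add_mod_self_right, Nat.mod_eq_of_lt hd]
  have hbK : b ≤ K - n := by
    have := euclidStep.snd_iterate_le (2 * i) (n, K % n)
    rw [hab] at this
    exact this.trans ((Nat.mod_eq_sub_mod hnK.le).trans_le (Nat.mod_le _ _))
  rw [ddown_eq_of_isGreatest hR (by omega), hrow]
  have := mod_add_mul_add_mul_eq_of_mul_add_lt (a := a) (b := b) (c := c) (d := d) (by omega)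
  omega

lemma ddown_eq_of_mod_eq_zero {K n k : ℕ} (hn : 0 < n) (hnK : n < K) (hK : K % n = 0)
    (hk : k < n) : ddown K n k = K - n := by
  rw [ddown_eq_of_isGreatest (isGreatest_columnOnes_of_mod_eq_zero hn hnK hK hk) (by omega)]
  omega

theorem ddown_add_eq {n D i k a b c d : ℕ} (hn : 0 < n) (hD : 0 < D)
    (hab : euclidStep^[2 * i] (n, D) = (a, b)) (hka : n - a ≤ k) (hk : k < n - a % b)
    (hcd : k % (n - a) = c * b + d) (hd : d < b) :
    ddown (n + D) n k = D + a % b + (a / b - 1 - c) * b := by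
  have hmod : (n + D) % n = D % n := Nat.add_mod_left n D
  rcases lt_trichotomy D n with h | rfl | h
  · rw [← Nat.mod_eq_of_lt h, ← hmod] at hab
    simpa only [Nat.add_sub_cancel_left] using
      ddown_eq_of_iterate_euclidStep hn (by omega) hab hka hk hcd hd
  · rcases i with _ | i
    · obtain ⟨rfl, rfl⟩ := Prod.mk.inj hab
      rw [ddown_eq_of_mod_eq_zero hn (by omega) (by simp) (by simpa using hk)]
      simp [Nat.div_self hn]
    · rw [show 2 * (i + 1) = 2 * i + 1 + 1 by ring, Function.iterate_succ_apply] at hab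
      have := euclidStep.snd_iterate_le (2 * i + 1) (euclidStep (D, D))
      rw [hab] at this
      simp only [euclidStep, Nat.mod_self, ite_self] at this
      omega
  · rcases i with _ | i
    · obtain ⟨rfl, rfl⟩ := Prod.mk.inj hab
      rw [Nat.mod_eq_of_lt h, Nat.sub_self] at hk
      omega
    · rw [show 2 * (i + 1) = 2 * i + 2 by ring, Function.iterate_add_apply,
        euclidStep.iterate_two_of_lt hn h, ← hmod] at hab
      simpa only [Nat.add_sub_cancel_left] using
        ddown_eq_of_iterate_euclidStep hn (by omega) hab hka hk hcd hd

end AIR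

theorem stmt5_general (K D i k c d : ℕ) (hD : 0 < D) (hDK : D < K)
    (hk1 : K - D - lamS K D (2 * i) ≤ k)
    (hk2 : k < K - D - lam K D (2 * i + 1))
    (hcd : k % (K - D - lamS K D (2 * i)) = c * lam K D (2 * i) + d)
    (hd : d < lam K D (2 * i)) :
    ddown K (K - D) k =
      D + lam K D (2 * i + 1) + (beta K D (2 * i) - 1 - c) * lam K D (2 * i) := by
  have hlam : lam K D (2 * i + 1) = lamS K D (2 * i) % lam K D (2 * i) :=
    if_neg (show lam K D (2 * i) ≠ 0 by omega)
  have hab : euclidStep^[2 * i] (K - D, D) = (lamS K D (2 * i), lam K D (2 * i)) := by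
    rw [← lamPair_eq_iterate]; rfl
  obtain ⟨n, rfl⟩ : ∃ n, K = n + D := ⟨K - D, by omega⟩
  rw [Nat.add_sub_cancel] at hk1 hk2 hcd hab ⊢
  rw [hlam] at hk2 ⊢
  exact ddown_add_eq (by omega) hD hab hk1 hk2 hcd hd

/-- Lemma 1: the down-distance of the diagonal entry L(k,k) for k ∈ C_i. -/
theorem stmt5 (K D l i k c d : ℕ) (hD : 0 < D) (hDK : D < K)
    (hl : lam K D (l + 1) = 0) (hmin : ∀ j ≤ l, lam K D j ≠ 0)
    (hi : i ≤ (l + 1) / 2)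
    (hk1 : K - D - lamS K D (2 * i) ≤ k)
    (hk2 : k < K - D - lam K D (2 * i + 1))
    (hcd : k % (K - D - lamS K D (2 * i)) = c * lam K D (2 * i) + d)
    (hd : d < lam K D (2 * i)) :
    ddown K (K - D) k =
      D + lam K D (2 * i + 1) + (beta K D (2 * i) - 1 - c) * lam K D (2 * i) :=
  stmt5_general K D i k c d hD hDK hk1 hk2 hcd hd
end

section
/- Let L be the (K,D) AIR matrix. If the entry L(j,k)=1 lies in the odd-submatrix I_{β_{2i+1}λ_{2i+1} × λ_{2i+1}} for some i ∈ [0, ⌈l/2⌉−1], then the up-distance of L(j,k) equals λ_{2i+1}; that is, j − λ_{2i+1} is the largest row index j′ < j with L(j′,k)=1. -/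
/-!
Let `c` be the remainder sequence `c₀ = K - n`, `c₁ = n`, `c_{s+2} = c_s % c_{s+1}` of the `K × n`
AIR matrix. Its odd block at level `t` has rows `[K - c_{2t}, K - c_{2t+2})` and columns
`[n - c_{2t+1}, n)`. At level `0` it lies in the top block of stacked copies of `I_n`, where the
ones of a column are exactly `n` apart. At level `t + 1` it lies in the bottom-right block, the AIR
matrix of size `(K % n) × (n % (K % n))`, whose sequence is `c` shifted by two, so induction
applies; the only exception is the first copy of `I_{n % (K % n)}` there, whose previous one is the
last one of the top block, exactly `n % (K % n)` rows higher.
-/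

/- The remainder sequence of the Euclidean algorithm, with no guard at zero (`x % 0 = x`).
The chain of the statement is `lam K D s = remSeq (K - D) D (s + 1)` while it is nonzero, and the
blocks of the `K × n` AIR matrix are cut out by `remSeq (K - n) n`. -/
def remSeq (a b : ℕ) : ℕ → ℕ
  | 0 => a
  | 1 => b
  | s + 2 => remSeq a b s % remSeq a b (s + 1)

theorem remSeq_succ (a b : ℕ) : ∀ s, remSeq a b (s + 1) = remSeq b (a % b) s
  | 0 => rfl
  | 1 => rfl
  | s + 2 => by
    show remSeq a b (s + 1) % remSeq a b (s + 2) = remSeq b (a % b) s % remSeq b (a % b) (s + 1)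
    rw [remSeq_succ a b s, remSeq_succ a b (s + 1)]

theorem remSeq_two_mul_add_le (a b : ℕ) : ∀ t s, remSeq a b (2 * t + s) ≤ remSeq a b s
  | 0, s => by rw [Nat.mul_zero, Nat.zero_add]
  | t + 1, s => by
    rw [show 2 * (t + 1) + s = 2 * t + s + 2 by ring]
    exact (Nat.mod_le _ _).trans (remSeq_two_mul_add_le a b t s)

theorem remSeq_sub_succ {a b : ℕ} (h : b ≤ a) (s : ℕ) :
    remSeq (a - b) b (s + 1) = remSeq a b (s + 1) := by
  rw [remSeq_succ, remSeq_succ, ← Nat.mod_eq_sub_mod h]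

theorem remSeq_mod_sub_succ {K n : ℕ} (h : n ≤ K) (hm : 0 < K % n) (s : ℕ) :
    remSeq (K % n - n % (K % n)) (n % (K % n)) (s + 1) = remSeq (K - n) n (s + 3) := by
  rw [remSeq_sub_succ (Nat.mod_lt _ hm).le, remSeq_succ (K - n) n (s + 2),
    remSeq_succ n _ (s + 1), ← Nat.mod_eq_sub_mod h]

theorem remSeq_sub_two_mul_add_two_le {K n : ℕ} (h : n ≤ K) (t : ℕ) :
    remSeq (K - n) n (2 * t + 2) ≤ K % n :=
  Nat.mod_eq_sub_mod h ▸ remSeq_two_mul_add_le _ _ t 2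

theorem remSeq_sub_two_mul_add_three_le {K n : ℕ} (h : n ≤ K) (t : ℕ) :
    remSeq (K - n) n (2 * t + 3) ≤ n % (K % n) :=
  Nat.mod_eq_sub_mod h ▸ remSeq_two_mul_add_le _ _ t 3

theorem sub_mod_modEq_zero (K n : ℕ) : K - K % n ≡ 0 [MOD n] :=
  Nat.sub_mod_eq_zero_of_mod_eq (Nat.mod_mod K n).symm

theorem le_sub_mod_of_lt {K n : ℕ} (h0 : 0 < n) (h1 : n < K) : n ≤ K - K % n :=
  Nat.le_of_dvd (by have := Nat.mod_lt K h0; omega)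
    (Nat.dvd_of_mod_eq_zero (sub_mod_modEq_zero K n))

section AirMatrix

variable {K n j k : ℕ}

theorem airEntry_top (h0 : 0 < n) (h1 : n < K) (hj : j < K - K % n) :
    airEntry K n j k = true ↔ j ≡ k [MOD n] := by
  rw [airEntry, dif_neg (by omega), if_pos hj, decide_eq_true_iff]
  rfl

theorem airEntry_bottomRight (h0 : 0 < n) (h1 : n < K) (hj : K - K % n ≤ j)
    (hk : n - n % (K % n) ≤ k) :
    airEntry K n j k =
      airEntry (K % n) (n % (K % n)) (j - (K - K % n)) (k - (n - n % (K % n))) := by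
  rw [airEntry, dif_neg (by omega), if_neg (by omega), if_neg (by omega)]

def airOnesAbove (K n j k : ℕ) : Set ℕ := {j' | j' < j ∧ airEntry K n j' k = true}

theorem dup_eq_of_isGreatest {d : ℕ} (hd : d ≤ j)
    (h : IsGreatest (airOnesAbove K n j k) (j - d)) : dup K n j k = d := by
  rw [dup, ← airOnesAbove, h.csSup_eq]
  omega

theorem isGreatest_airOnesAbove_top (h0 : 0 < n) (hnj : n ≤ j) (hj : j < K - K % n)
    (he : airEntry K n j k = true) : IsGreatest (airOnesAbove K n j k) (j - n) := by
  have h1 : n < K := by omega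
  rw [airEntry_top h0 h1 hj] at he
  refine ⟨⟨by omega, (airEntry_top h0 h1 (by omega)).2 ?_⟩, fun j' ⟨hj', he'⟩ => ?_⟩
  · exact (Nat.mod_eq_sub_mod hnj).symm.trans he
  · rw [airEntry_top h0 h1 (by omega)] at he'
    have := (he'.trans he.symm).add_le_of_lt hj'
    omega

theorem isGreatest_airOnesAbove_top_last (h0 : 0 < n) (h1 : n < K) (hk : k < n) :
    IsGreatest (airOnesAbove K n (K - K % n) k) (K - K % n - n + k) := by
  have hq := le_sub_mod_of_lt h0 h1
  have hlast : K - K % n - n + k ≡ k [MOD n] := by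
    refine Nat.ModEq.add_right_cancel' n ?_
    rw [show K - K % n - n + k + n = K - K % n + k by omega]
    simpa only [zero_add] using ((sub_mod_modEq_zero K n).add_right k).trans Nat.add_modEq_right.symm
  refine ⟨⟨by omega, (airEntry_top h0 h1 (by omega)).2 hlast⟩, fun j' ⟨hj', he'⟩ => ?_⟩
  rw [airEntry_top h0 h1 hj'] at he'
  exact (he'.trans hlast.symm).le_of_lt_add (by omega)

/- An entry in the first copy of `I_{n % (K % n)}` inside the bottom-right block: nothing lies
between it and the top block in its column, so the previous one is the last one of the top block. -/
theorem isGreatest_airOnesAbove_cross (h1 : n < K) (hm : 0 < K % n) (hj : K - K % n ≤ j)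
    (hj' : j < K - K % n + n % (K % n)) (hk : n - n % (K % n) ≤ k) (hkn : k < n)
    (he : airEntry K n j k = true) :
    n % (K % n) ≤ j ∧ IsGreatest (airOnesAbove K n j k) (j - n % (K % n)) := by
  have h0 : 0 < n := by omega
  have hq := le_sub_mod_of_lt h0 h1
  have hn' : n % (K % n) < K % n := Nat.mod_lt _ hm
  have hn'n : n % (K % n) ≤ n := Nat.mod_le _ _
  have hsub : ∀ r < n % (K % n),
      airEntry K n (K - K % n + r) k = true ↔ r = k - (n - n % (K % n)) := by
    intro r hr
    have := le_sub_mod_of_lt (K := K % n) (by omega) hn'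
    rw [airEntry_bottomRight h0 h1 (by omega) hk, Nat.add_sub_cancel_left,
      airEntry_top (by omega) hn' (by omega), Nat.ModEq, Nat.mod_eq_of_lt hr,
      Nat.mod_eq_of_lt (by omega)]
  have hjk := (hsub (j - (K - K % n)) (by omega)).1 (by rwa [Nat.add_sub_cancel' hj])
  obtain ⟨⟨-, hlast⟩, hbound⟩ := isGreatest_airOnesAbove_top_last h0 h1 hkn
  refine ⟨by omega, ⟨⟨by omega, ?_⟩, fun j' ⟨hj'j, he'⟩ => ?_⟩⟩
  · rwa [show j - n % (K % n) = K - K % n - n + k by omega]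
  · by_cases hj'q : K - K % n ≤ j'
    · have := (hsub (j' - (K - K % n)) (by omega)).1 (by rwa [Nat.add_sub_cancel' hj'q])
      omega
    · exact hbound ⟨by omega, he'⟩ |>.trans (by omega)

theorem isGreatest_airOnesAbove_of_bottomRight {d : ℕ} (h0 : 0 < n) (h1 : n < K)
    (hj : K - K % n ≤ j) (hk : n - n % (K % n) ≤ k) (hd : d ≤ j - (K - K % n))
    (h : IsGreatest (airOnesAbove (K % n) (n % (K % n)) (j - (K - K % n))
      (k - (n - n % (K % n)))) (j - (K - K % n) - d)) :
    IsGreatest (airOnesAbove K n j k) (j - d) := by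
  obtain ⟨⟨hlt, he⟩, hbound⟩ := h
  refine ⟨⟨by omega, ?_⟩, fun j' ⟨hj', he'⟩ => ?_⟩
  · rwa [airEntry_bottomRight h0 h1 (by omega) hk,
      show j - d - (K - K % n) = j - (K - K % n) - d by omega]
  · by_cases hj'q : K - K % n ≤ j'
    · rw [airEntry_bottomRight h0 h1 hj'q hk] at he'
      have := hbound ⟨by omega, he'⟩
      omega
    · omega

end AirMatrix

theorem isGreatest_airOnesAbove_oddBlock (t : ℕ) : ∀ {K n j k : ℕ},
    K - remSeq (K - n) n (2 * t) ≤ j → j < K - remSeq (K - n) n (2 * t + 2) →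
    n - remSeq (K - n) n (2 * t + 1) ≤ k → k < n → airEntry K n j k = true →
    remSeq (K - n) n (2 * t + 1) ≤ j ∧
      IsGreatest (airOnesAbove K n j k) (j - remSeq (K - n) n (2 * t + 1)) := by
  induction t with
  | zero =>
    intro K n j k hj1 hj2 _ hk2 he
    change K - (K - n) ≤ j at hj1
    change j < K - (K - n) % n at hj2
    change n ≤ j ∧ IsGreatest (airOnesAbove K n j k) (j - n)
    have hnK : n < K := by
      by_contra! h
      rw [Nat.sub_eq_zero_of_le h, Nat.zero_mod] at hj2
      omega
    rw [← Nat.mod_eq_sub_mod hnK.le] at hj2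
    exact ⟨by omega, isGreatest_airOnesAbove_top (by omega) (by omega) hj2 he⟩
  | succ t ih =>
    intro K n j k hj1 hj2 hk1 hk2 he
    rw [show 2 * (t + 1) + 2 = 2 * t + 4 by ring, show 2 * (t + 1) + 1 = 2 * t + 3 by ring,
      show 2 * (t + 1) = 2 * t + 2 by ring] at *
    have hnK : n < K := by
      have : remSeq (K - n) n (2 * t + 2) ≤ K - n := remSeq_two_mul_add_le _ _ (t + 1) 0
      omega
    have hc2 := remSeq_sub_two_mul_add_two_le hnK.le t
    have hc4 : remSeq (K - n) n (2 * t + 4) ≤ K % n :=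
      remSeq_sub_two_mul_add_two_le hnK.le (t + 1)
    have hc3 := remSeq_sub_two_mul_add_three_le hnK.le t
    have hm : 0 < K % n := by omega
    have hn'm := Nat.mod_lt n hm
    have hn'n := Nat.mod_le n (K % n)
    have hq := le_sub_mod_of_lt (by omega) hnK
    have hsub := remSeq_mod_sub_succ hnK.le hm
    by_cases hin : K % n - remSeq (K % n - n % (K % n)) (n % (K % n)) (2 * t) ≤ j - (K - K % n)
    · have e1 := hsub (2 * t)
      have e2 : remSeq (K % n - n % (K % n)) (n % (K % n)) (2 * t + 2) =
          remSeq (K - n) n (2 * t + 4) := hsub (2 * t + 1)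
      rw [airEntry_bottomRight (by omega) hnK (by omega) (by omega)] at he
      obtain ⟨hd, hg⟩ := ih hin (by omega) (by omega) (by omega) he
      rw [e1] at hd hg
      exact ⟨by omega,
        isGreatest_airOnesAbove_of_bottomRight (by omega) hnK (by omega) (by omega) hd hg⟩
    · cases t with
      | zero =>
        have : remSeq (K % n - n % (K % n)) (n % (K % n)) (2 * 0) = K % n - n % (K % n) := rfl
        have h3 : remSeq (K - n) n (2 * 0 + 3) = n % (K % n) :=
          congrArg (n % ·) (Nat.mod_eq_sub_mod hnK.le).symm
        rw [h3]
        exact isGreatest_airOnesAbove_cross hnK hm (by omega) (by omega) (by omega) hk2 he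
      | succ t =>
        have : remSeq (K % n - n % (K % n)) (n % (K % n)) (2 * (t + 1)) =
            remSeq (K - n) n (2 * (t + 1) + 2) := hsub (2 * t + 1)
        omega

theorem dup_eq_of_oddBlock {K n j k t : ℕ} (hj1 : K - remSeq (K - n) n (2 * t) ≤ j)
    (hj2 : j < K - remSeq (K - n) n (2 * t + 2)) (hk1 : n - remSeq (K - n) n (2 * t + 1) ≤ k)
    (hk2 : k < n) (he : airEntry K n j k = true) :
    dup K n j k = remSeq (K - n) n (2 * t + 1) :=
  let ⟨hd, hg⟩ := isGreatest_airOnesAbove_oddBlock t hj1 hj2 hk1 hk2 he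
  dup_eq_of_isGreatest hd hg

theorem lam_eq_zero_of_le {K D s t : ℕ} (h : lam K D s = 0) (hst : s ≤ t) : lam K D t = 0 := by
  induction t, hst using Nat.le_induction with
  | base => exact h
  | succ t _ ih =>
    show (if lam K D t = 0 then 0 else lamS K D t % lam K D t) = 0
    rw [if_pos ih]

theorem lamPair_eq_remSeq {K D : ℕ} : ∀ s, (∀ r < s, lam K D r ≠ 0) →
    lamPair K D s = (remSeq (K - D) D s, remSeq (K - D) D (s + 1))
  | 0, _ => rfl
  | s + 1, h => by
    have ih := lamPair_eq_remSeq s fun r hr => h r (by omega)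
    show (lam K D s, if lam K D s = 0 then 0 else lamS K D s % lam K D s) = _
    rw [if_neg (h s (by omega)), lam, lamS, ih]
    rfl

theorem lam_eq_remSeq {K D s : ℕ} (h : ∀ r < s, lam K D r ≠ 0) :
    lam K D s = remSeq (K - D) D (s + 1) :=
  congrArg Prod.snd (lamPair_eq_remSeq s h)

theorem stmt6_general (K D i j k : ℕ)
    (hj1 : K - lam K D (2 * i) ≤ j) (hj2 : j < K - lam K D (2 * i + 2))
    (hk1 : K - D - lam K D (2 * i + 1) ≤ k) (hk2 : k < K - D)
    (he : airEntry K (K - D) j k = true) :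
    dup K (K - D) j k = lam K D (2 * i + 1) := by
  have hlam : lam K D (2 * i + 1) ≠ 0 := by omega
  have hr : ∀ s ≤ 2 * i + 2, lam K D s = remSeq (K - D) D (s + 1) := fun s hs =>
    lam_eq_remSeq fun r hrs h0 => hlam (lam_eq_zero_of_le h0 (by omega))
  have hD : K - (K - D) = D := Nat.sub_sub_self (by omega)
  -- If `D < K - D` the top block of `L` is a single `I_{K-D}` and the level-0 odd block of
  -- `remSeq D (K - D)` is empty, so level `i` of the statement is level `i + 1` of the matrix.
  rcases lt_trichotomy D (K - D) with h | h | h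
  · have e : ∀ s ≤ 2 * i + 2, lam K D s = remSeq (K - (K - D)) (K - D) (s + 2) := fun s hs => by
      rw [hr s hs, hD, remSeq_succ D, Nat.mod_eq_of_lt h]
    rw [e _ (by omega)] at hj1 hj2 hk1 ⊢
    exact dup_eq_of_oddBlock (t := i + 1) hj1 hj2 hk1 hk2 he
  · have h1 : lam K D 1 = 0 := by
      rw [hr 1 (by omega)]
      exact (congrArg (· % D) h).symm.trans (Nat.mod_self D)
    exact absurd (lam_eq_zero_of_le h1 (by omega)) hlam
  · have e : ∀ s ≤ 2 * i + 2, lam K D s = remSeq (K - (K - D)) (K - D) s := fun s hs => by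
      rw [hr s hs, hD, remSeq_succ, Nat.mod_eq_of_lt h]
    rw [e _ (by omega)] at hj1 hj2 hk1 ⊢
    exact dup_eq_of_oddBlock hj1 hj2 hk1 hk2 he

/-- Lemma 2 (odd submatrix): up-distance of an entry in I_{β_{2i+1}λ_{2i+1} × λ_{2i+1}}. -/
theorem stmt6 (K D l i j k : ℕ) (hD : 0 < D) (hDK : D < K)
    (hl : lam K D (l + 1) = 0) (hmin : ∀ j ≤ l, lam K D j ≠ 0)
    (hi : 2 * i + 1 ≤ l)
    (hj1 : K - lam K D (2 * i) ≤ j) (hj2 : j < K - lam K D (2 * i + 2))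
    (hk1 : K - D - lam K D (2 * i + 1) ≤ k) (hk2 : k < K - D)
    (he : airEntry K (K - D) j k = true) :
    dup K (K - D) j k = lam K D (2 * i + 1) :=
  stmt6_general K D i j k hj1 hj2 hk1 hk2 he
end

section
/- Let L be the (K,D) AIR matrix and let L(j,k)=1 lie in an even-submatrix I_{λ_{2i} × β_{2i}λ_{2i}} with within-block column index k_R ∈ [0, (β_{2i}−1)λ_{2i} − 1]. Then the right-distance of L(j,k) equals λ_{2i}; i.e., the smallest k′ > k with L(j,k′)=1 satisfies k′ − k = λ_{2i}. -/
/-!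
In its last `a % b` rows the AIR matrix of size `a × b` consists of horizontal copies of
`I_{a % b}` followed, in the lower-right corner, by the AIR matrix of size
`(a % b) × (b % (a % b))`. Entries and right-distances in that corner are those of the smaller
matrix, so repeated reductions bring an entry of the even submatrix into a block of horizontal
identities of width `λ_{2i}`, where the next `1` of its row lies exactly `λ_{2i}` columns further
right. The sizes met along the way form the Euclidean remainder sequence of `(K, K - D)`, which is
`K, λ₋₁, λ₀, λ₁, …` when `D < K - D` and `K, λ₁, λ₂, …` when `K - D < D` (then `λ₁ = λ₋₁`).
-/

namespace AIR

def euclidStep (p : ℕ × ℕ) : ℕ × ℕ := (p.2, p.1 % p.2)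

/-- The Euclidean remainder sequence `a, b, a % b, b % (a % b), …`. -/
def remSeq (a b t : ℕ) : ℕ := (euclidStep^[t] (a, b)).1

@[simp]
theorem remSeq_zero (a b : ℕ) : remSeq a b 0 = a := rfl

@[simp]
theorem remSeq_one (a b : ℕ) : remSeq a b 1 = b := rfl

theorem remSeq_succ (a b t : ℕ) : remSeq a b (t + 1) = remSeq b (a % b) t := rfl

theorem remSeq_add_two (a b t : ℕ) :
    remSeq a b (t + 2) = remSeq a b t % remSeq a b (t + 1) := by
  simp only [remSeq, Function.iterate_succ_apply', euclidStep]

theorem remSeq_add_two_mul_le (a b t d : ℕ) : remSeq a b (t + 2 * d) ≤ remSeq a b t := by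
  induction d with
  | zero => rfl
  | succ d ih =>
    rw [show t + 2 * (d + 1) = t + 2 * d + 2 by ring, remSeq_add_two]
    exact (Nat.mod_le _ _).trans ih

theorem two_mul_mod_le {x y : ℕ} (hy : 0 < y) (hyx : y ≤ x) : 2 * (x % y) ≤ x := by
  have := Nat.mod_add_div x y
  have := Nat.mod_lt x hy
  have : y ≤ y * (x / y) := Nat.le_mul_of_pos_right y (Nat.div_pos hyx hy)
  omega

theorem airEntry_eq_of_lowerLeft {a b j k : ℕ} (hb : 0 < b) (hba : b < a) (hj : a - a % b ≤ j)
    (hk : k < b - b % (a % b)) :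
    airEntry a b j k = decide (k % (a % b) = j - (a - a % b)) := by
  rw [airEntry]
  simp [hb.ne', hba.not_ge, hj.not_gt, hk]

theorem airEntry_eq_of_lowerRight {a b j k : ℕ} (hb : 0 < b) (hba : b < a) (hj : a - a % b ≤ j)
    (hk : b - b % (a % b) ≤ k) :
    airEntry a b j k =
      airEntry (a % b) (b % (a % b)) (j - (a - a % b)) (k - (b - b % (a % b))) := by
  rw [airEntry]
  simp [hb.ne', hba.not_ge, hj.not_gt, hk.not_gt]

theorem dright_eq_of_forall_lt {K n j k d : ℕ} (hd : 0 < d) (hdn : k + d < n)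
    (he : airEntry K n j (k + d) = true)
    (hlt : ∀ t, 0 < t → t < d → airEntry K n j (k + t) = false) :
    dright K n j k = d := by
  have hmem : d ∈ {t : ℕ | 0 < t ∧ k + t < n ∧ airEntry K n j (k + t) = true} := ⟨hd, hdn, he⟩
  refine le_antisymm (Nat.sInf_le hmem) (le_csInf ⟨d, hmem⟩ ?_)
  rintro t ⟨ht, -, hte⟩
  by_contra! htd
  simp [hlt t ht htd] at hte

theorem dright_eq_of_lowerRight {a b j k : ℕ} (hb : 0 < b) (hba : b < a) (hj : a - a % b ≤ j)
    (hk : b - b % (a % b) ≤ k) :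
    dright a b j k = dright (a % b) (b % (a % b)) (j - (a - a % b)) (k - (b - b % (a % b))) := by
  have hb' : b % (a % b) ≤ b := Nat.mod_le _ _
  unfold dright
  congr 1
  ext t
  simp only [Set.mem_ofPred_eq]
  rw [airEntry_eq_of_lowerRight hb hba hj (by omega : b - b % (a % b) ≤ k + t),
    show k + t - (b - b % (a % b)) = k - (b - b % (a % b)) + t by omega]
  constructor <;> rintro ⟨ht, htn, hte⟩ <;> exact ⟨ht, by omega, hte⟩

theorem dright_eq_of_lowerLeft {a b j k : ℕ} (hb : 0 < b) (hba : b < a) (hab : 0 < a % b)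
    (hj : a - a % b ≤ j) (hk : k + a % b < b - b % (a % b)) (he : airEntry a b j k = true) :
    dright a b j k = a % b := by
  have hres : k % (a % b) = j - (a - a % b) := by
    simpa [airEntry_eq_of_lowerLeft hb hba hj (by omega : k < b - b % (a % b))] using he
  refine dright_eq_of_forall_lt hab (by omega) ?_ fun t ht hta => ?_
  · rw [airEntry_eq_of_lowerLeft hb hba hj hk]
    simp [hres]
  · rw [airEntry_eq_of_lowerLeft hb hba hj (by omega)]
    simp only [decide_eq_false_iff_not, ← hres]
    intro hmod
    have : a % b ∣ t := (Nat.modEq_zero_iff_dvd).1 (Nat.ModEq.add_left_cancel' k hmod)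
    exact absurd (Nat.le_of_dvd ht this) (by omega)

theorem dright_eq_remSeq (m : ℕ) {a b j k : ℕ} (hba : b < a)
    (hr : ∀ t ≤ 2 * m + 2, remSeq a b t ≠ 0)
    (hj : a - remSeq a b (2 * m + 2) ≤ j) (hk : b - remSeq a b (2 * m + 1) ≤ k)
    (hkb : k + remSeq a b (2 * m + 2) < b - remSeq a b (2 * m + 3))
    (he : airEntry a b j k = true) :
    dright a b j k = remSeq a b (2 * m + 2) := by
  have hb : 0 < b := Nat.pos_of_ne_zero (hr 1 (by omega))
  have hab : 0 < a % b := Nat.pos_of_ne_zero (hr 2 (by omega))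
  induction m generalizing a b j k with
  | zero => exact dright_eq_of_lowerLeft hb hba hab hj hkb he
  | succ m ih =>
    have hshift (t : ℕ) : remSeq a b (t + 2) = remSeq (a % b) (b % (a % b)) t := rfl
    simp only [show 2 * (m + 1) + 1 = 2 * m + 1 + 2 by ring,
      show 2 * (m + 1) + 2 = 2 * m + 2 + 2 by ring,
      show 2 * (m + 1) + 3 = 2 * m + 3 + 2 by ring, hshift] at hj hk hkb ⊢
    have hrow : remSeq (a % b) (b % (a % b)) (2 * m + 2) ≤ a % b := by
      simpa [show 2 * (m + 1) = 2 * m + 2 by ring] using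
        remSeq_add_two_mul_le (a % b) (b % (a % b)) 0 (m + 1)
    have hcol : remSeq (a % b) (b % (a % b)) (2 * m + 1) ≤ b % (a % b) := by
      simpa [show 1 + 2 * m = 2 * m + 1 by ring] using
        remSeq_add_two_mul_le (a % b) (b % (a % b)) 1 m
    have := Nat.mod_le a b
    have := Nat.mod_le b (a % b)
    have hj' : a - a % b ≤ j := by omega
    have hk' : b - b % (a % b) ≤ k := by omega
    rw [dright_eq_of_lowerRight hb hba hj' hk']
    exact ih (Nat.mod_lt _ hab) (fun t ht => hr (t + 2) (by omega)) (by omega) (by omega)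
      (by omega) (by rwa [← airEntry_eq_of_lowerRight hb hba hj' hk'])
      (Nat.pos_of_ne_zero (hr 3 (by omega))) (Nat.pos_of_ne_zero (hr 4 (by omega)))

theorem add_remSeq_lt_of_mod_lt (m : ℕ) {a b k : ℕ} (hr : ∀ t ≤ 2 * m + 2, remSeq a b t ≠ 0)
    (hk1 : b - remSeq a b (2 * m + 1) ≤ k)
    (hk2 : k < b - remSeq a b (2 * m + 1) +
      remSeq a b (2 * m + 1) / remSeq a b (2 * m + 2) * remSeq a b (2 * m + 2))
    (hkR : k % (b - remSeq a b (2 * m + 1)) <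
      (remSeq a b (2 * m + 1) / remSeq a b (2 * m + 2) - 1) * remSeq a b (2 * m + 2)) :
    k + remSeq a b (2 * m + 2) < b - remSeq a b (2 * m + 3) := by
  set c := remSeq a b (2 * m + 1)
  set d := remSeq a b (2 * m + 2)
  have hcb : c ≤ b := by
    simpa [show 1 + 2 * m = 2 * m + 1 by ring] using remSeq_add_two_mul_le a b 1 m
  have hnext : remSeq a b (2 * m + 3) = c % d := remSeq_add_two a b (2 * m + 1)
  have hdiv := Nat.mod_add_div' c d
  -- the block's offset `b - c` is `0` or at least its width, so `k % (b - c)` is the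
  -- within-block index `k - (b - c)`
  have hX : b - c = 0 ∨ c ≤ b - c := by
    rcases m with _ | m
    · simp [c]
    · have hc3 : c ≤ remSeq a b 3 := by
        simpa [show 3 + 2 * m = 2 * (m + 1) + 1 by ring] using remSeq_add_two_mul_le a b 3 m
      have hb : 0 < b := Nat.pos_of_ne_zero (hr 1 (by omega))
      have h3 : 2 * remSeq a b 3 ≤ b :=
        two_mul_mod_le (Nat.pos_of_ne_zero (hr 2 (by omega))) (Nat.mod_lt a hb).le
      omega
  have hkX : k % (b - c) = k - (b - c) := by
    rcases hX with hX | hX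
    · rw [hX, Nat.mod_zero, Nat.sub_zero]
    · rw [Nat.mod_eq_sub_mod hk1, Nat.mod_eq_of_lt (by omega)]
  rw [hkX, Nat.sub_one_mul] at hkR
  omega

theorem remSeq_add_succ_of_lt {n d : ℕ} (h : d < n) (t : ℕ) :
    remSeq (n + d) n (t + 1) = remSeq n d t := by
  rw [remSeq_succ, Nat.add_mod_left, Nat.mod_eq_of_lt h]

theorem remSeq_add_succ_of_gt {n d : ℕ} (h : n < d) (t : ℕ) :
    remSeq (n + d) n (t + 1) = remSeq n d (t + 2) := by
  rw [remSeq_succ, Nat.add_mod_left, remSeq_succ, remSeq_succ, Nat.mod_eq_of_lt h]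

theorem lamPair_eq_iterate {K D t : ℕ} (h : ∀ s < t, lam K D s ≠ 0) :
    lamPair K D t = euclidStep^[t] (K - D, D) := by
  induction t with
  | zero => rfl
  | succ t ih =>
    have ht : (lamPair K D t).2 ≠ 0 := h t (by omega)
    rw [Function.iterate_succ_apply', ← ih fun s hs => h s (by omega)]
    simp only [lamPair, euclidStep, if_neg ht]

theorem lamS_eq_remSeq {K D t : ℕ} (h : ∀ s < t, lam K D s ≠ 0) :
    lamS K D t = remSeq (K - D) D t :=
  congrArg Prod.fst (lamPair_eq_iterate h)

theorem exists_remSeq_eq_lam {K D i : ℕ} (hDK : D < K) (hlam : ∀ s ≤ 2 * i, lam K D s ≠ 0)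
    (hβ : 1 < beta K D (2 * i)) :
    ∃ m, (∀ t ≤ 2 * m + 2, remSeq K (K - D) t ≠ 0) ∧
      remSeq K (K - D) (2 * m + 1) = lamS K D (2 * i) ∧
      remSeq K (K - D) (2 * m + 2) = lam K D (2 * i) := by
  have hS (t : ℕ) (ht : t ≤ 2 * i + 1) : lamS K D t = remSeq (K - D) D t :=
    lamS_eq_remSeq fun s hs => hlam s (by omega)
  have hnz (t : ℕ) (ht : t ≤ 2 * i + 1) : remSeq (K - D) D t ≠ 0 := by
    rcases t with _ | u
    · exact Nat.sub_ne_zero_of_lt hDK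
    · rw [← hS _ ht]
      exact hlam u (by omega)
  suffices ∃ m e, 2 * m + e = 2 * i ∧ ∀ t, remSeq K (K - D) (t + 1) = remSeq (K - D) D (t + e) by
    obtain ⟨m, e, hme, hshift⟩ := this
    refine ⟨m, fun t ht => ?_, by rw [hshift, hme, hS _ (by omega)], ?_⟩
    · rcases t with _ | s
      · exact (Nat.zero_lt_of_lt hDK).ne'
      · rw [hshift]
        exact hnz _ (by omega)
    · rw [hshift, show 2 * m + 1 + e = 2 * i + 1 by omega, ← hS _ le_rfl]
      rfl
  obtain ⟨n, rfl⟩ : ∃ n, K = n + D := ⟨K - D, by omega⟩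
  rw [Nat.add_sub_cancel] at hnz hS ⊢
  rcases lt_or_ge D n with hlt | hge
  · exact ⟨i, 0, by ring, remSeq_add_succ_of_lt hlt⟩
  · obtain ⟨i', rfl⟩ : ∃ i', i = i' + 1 := by
      refine Nat.exists_eq_add_one.2 (Nat.pos_of_ne_zero fun hi => ?_)
      subst hi
      have hβ0 : beta (n + D) D (2 * 0) ≤ 1 := by
        show (n + D - D) / D ≤ 1
        exact Nat.div_le_of_le_mul (by omega)
      omega
    have hgt : n < D := by
      refine lt_of_le_of_ne hge fun heq => hlam 1 (by omega) ?_
      show (if D = 0 then 0 else (n + D - D) % D) = 0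
      simp [heq]
    exact ⟨i', 2, by ring, remSeq_add_succ_of_gt hgt⟩

end AIR

open AIR in
theorem stmt8_general (K D l i j k : ℕ) (hD : 0 < D) (hDK : D < K)
    (hmin : ∀ j ≤ l, lam K D j ≠ 0)
    (hi : 2 * i ≤ l)
    (hj1 : K - lam K D (2 * i) ≤ j)
    (hk1 : K - D - lamS K D (2 * i) ≤ k)
    (hk2 : k < K - D - lamS K D (2 * i) + beta K D (2 * i) * lam K D (2 * i))
    (he : airEntry K (K - D) j k = true)
    (hkR : k % (K - D - lamS K D (2 * i)) < (beta K D (2 * i) - 1) * lam K D (2 * i)) :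
    dright K (K - D) j k = lam K D (2 * i) := by
  have hβ : 1 < beta K D (2 * i) := by
    by_contra h
    rw [Nat.sub_eq_zero_of_le (not_lt.1 h), zero_mul] at hkR
    exact Nat.not_lt_zero _ hkR
  obtain ⟨m, hr, hc, hd⟩ := exists_remSeq_eq_lam hDK (fun s hs => hmin s (by omega)) hβ
  rw [show beta K D (2 * i) = lamS K D (2 * i) / lam K D (2 * i) from rfl, ← hc, ← hd]
    at hk2 hkR
  rw [← hd] at hj1 ⊢
  rw [← hc] at hk1
  exact dright_eq_remSeq m (Nat.sub_lt hDK.pos hD) hr hj1 hk1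
    (add_remSeq_lt_of_mod_lt m hr hk1 hk2 hkR) he

/-- Lemma 3 (case i): right-distance of an entry of the even submatrix whose
within-block column index lies in [0, (β_{2i}−1)λ_{2i} − 1] equals λ_{2i}. -/
theorem stmt8 (K D l i j k : ℕ) (hD : 0 < D) (hDK : D < K)
    (hl : lam K D (l + 1) = 0) (hmin : ∀ j ≤ l, lam K D j ≠ 0)
    (hi : 2 * i ≤ l)
    (hj1 : K - lam K D (2 * i) ≤ j) (hj2 : j < K)
    (hk1 : K - D - lamS K D (2 * i) ≤ k)
    (hk2 : k < K - D - lamS K D (2 * i) + beta K D (2 * i) * lam K D (2 * i))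
    (he : airEntry K (K - D) j k = true)
    (hkR : k % (K - D - lamS K D (2 * i)) < (beta K D (2 * i) - 1) * lam K D (2 * i)) :
    dright K (K - D) j k = lam K D (2 * i) :=
  stmt8_general K D l i j k hD hDK hmin hi hj1 hk1 hk2 he hkR
end

section
/- For the one-sided SNC-SUICP with K messages and side-information size D ≤ K−2, where receiver R_k demands x_k and knows {x_{k+1},...,x_{k+D}} (indices mod K), the minimum length of a scalar linear index code over any field F_q is exactly K − D; equivalently the minrank of the side-information graph is K − D. -/
/-!
For the lower bound, the side information of receivers `0, …, K - D - 1` only points to larger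
indices, so decoding them from the last one down shows that a code is injective on messages
supported there; hence its length is at least `K - D`.

For the upper bound, let `g₀, g₁, …` be a `K`-periodic sequence in `F^(K-D)` whose windows of
`K - D` consecutive terms are linearly independent. Then `x ↦ ∑ xⱼ gⱼ` is a code: once receiver
`k` removes its `D` known messages, the unknowns `x_{k+D+1}, …, x_{k+K} = x_k` are the coefficients
of an independent window. Such sequences exist for every window length `N ≤ K` by a Euclidean
recursion on `(K, N)`: appending the first window to one period turns period `K` into `K + N`, and
the coordinates of a basis of the kernel of `x ↦ ∑ xⱼ gⱼ` form a `K`-periodic sequence whose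
windows of the complementary length `K - N` are independent.
-/

open Finset Function Module
open Fin.NatCast

section IndexCode

variable {F W ι κ : Type*} [Field F] [AddCommGroup W] [Module F W]

def IsIndexCode (side : ι → κ → ι) (E : (ι → F) → W) : Prop :=
  ∀ k, ∃ dec : W → (κ → F) → F, ∀ x, dec (E x) (fun t => x (side k t)) = x k

theorem isIndexCode_iff {side : ι → κ → ι} (E : (ι → F) →ₗ[F] W) :
    IsIndexCode side E ↔ ∀ k x, E x = 0 → (∀ t, x (side k t) = 0) → x k = 0 := by
  refine ⟨fun hE k x hx hside => ?_, fun hE k => ?_⟩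
  · obtain ⟨dec, hdec⟩ := hE k
    calc x k = dec (E x) (fun t => x (side k t)) := (hdec x).symm
      _ = dec (E 0) (fun t => (0 : ι → F) (side k t)) := by
        rw [hx, map_zero]
        exact congrArg _ (funext hside)
      _ = 0 := hdec 0
  · have hfac :
        FactorsThrough (fun x : ι → F => x k) (fun x => (E x, fun t => x (side k t))) := by
      intro x y hxy
      obtain ⟨hE_eq, hside_eq⟩ := Prod.mk.inj hxy
      refine sub_eq_zero.mp (hE k (x - y) (by rw [map_sub, hE_eq, sub_self]) fun t => ?_)
      simpa [sub_eq_zero] using congrFun hside_eq t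
    exact ⟨fun w s => extend (fun x => (E x, fun t => x (side k t))) (fun x => x k) 0 (w, s),
      hfac.extend_apply 0⟩

/-- The maximum acyclic induced subgraph bound. -/
theorem IsIndexCode.card_le [LinearOrder ι] [Finite ι] [FiniteDimensional F W]
    {side : ι → κ → ι} {E : (ι → F) →ₗ[F] W} (hE : IsIndexCode side E) (s : Finset ι)
    (hs : ∀ k ∈ s, ∀ t, side k t ∈ s → k < side k t) : #s ≤ finrank F W := by
  rw [isIndexCode_iff] at hE
  have hker : ∀ x, E x = 0 → (∀ i ∉ s, x i = 0) → x = 0 := by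
    intro x hx hsupp
    funext i
    induction i using WellFoundedGT.induction with
    | _ i ih =>
      by_cases hi : i ∈ s
      · refine hE i x hx fun t => ?_
        by_cases ht : side i t ∈ s
        · exact ih _ (hs i hi t ht)
        · exact hsupp _ ht
      · exact hsupp i hi
  let extend₀ := ExtendByZero.linearMap F ((↑) : s → ι)
  have hinj : Injective (E ∘ₗ extend₀) := by
    rw [← LinearMap.ker_eq_bot, LinearMap.ker_eq_bot']
    intro y hy
    have h0 := hker (extend₀ y) hy fun i hi =>
      extend_apply' _ _ _ fun ⟨j, hj⟩ => hi (hj ▸ j.2)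
    funext j
    simpa [extend₀, Subtype.val_injective.extend_apply] using congrFun h0 j
  simpa using LinearMap.finrank_le_finrank_of_injective hinj

end IndexCode

section Windows

variable {F V : Type*} [Field F] [AddCommGroup V] [Module F V]

variable (F) in
def IndepWindows (g : ℕ → V) (n : ℕ) : Prop :=
  ∀ k, LinearIndependent F fun t : Fin n => g (k + t)

/-- After a cyclic shift, the coefficients outside the `N` vanishing ones form a window of `g`. -/
theorem IndepWindows.eq_zero {K N d : ℕ} [NeZero K] {g : ℕ → V} (hg : Periodic g K)
    (hind : IndepWindows F g d) (hK : N + d = K) {x : Fin K → F} (hx : ∑ j, x j • g j = 0)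
    (a : ℕ) (hzero : ∀ i < N, x (a + i : ℕ) = 0) : x = 0 := by
  have hshift : ∑ i ∈ range (N + d), x (a + i : ℕ) • g (a + i) = 0 := by
    rw [hK, ← hx, ← Equiv.sum_comp (Equiv.addLeft (a : Fin K)), ← Fin.sum_univ_eq_sum_range]
    refine sum_congr rfl fun i _ => ?_
    simp [Fin.val_add, hg.map_mod_nat]
  rw [sum_range_add, sum_eq_zero fun i hi => by rw [hzero i (mem_range.mp hi), zero_smul],
    zero_add] at hshift
  have htail : ∀ i : Fin d, x (a + N + i : ℕ) = 0 := by
    refine Fintype.linearIndependent_iff.mp (hind (a + N)) _ ?_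
    rw [Fin.sum_univ_eq_sum_range (fun i => x (a + N + i : ℕ) • g (a + N + i)), ← hshift]
    simp only [add_assoc]
  funext j
  obtain ⟨i, hi, rfl⟩ : ∃ i < K, ((a + i : ℕ) : Fin K) = j :=
    ⟨((j - a : Fin K) : ℕ), Fin.is_lt _, by simp⟩
  rcases lt_or_ge i N with h | h
  · exact hzero i h
  · simpa [show a + N + (i - N) = a + i by omega] using htail ⟨i - N, by omega⟩

theorem IndepWindows.append {K N : ℕ} [NeZero N] {g : ℕ → V} (hg : Periodic g K)
    (hind : IndepWindows F g N) :
    IndepWindows F (fun j => g (j % (K + N))) N := by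
  intro k
  simp only [← Nat.mod_add_mod k]
  obtain ⟨r, hr, hkr⟩ : ∃ r < K + N, k % (K + N) = r :=
    ⟨_, Nat.mod_lt _ (by have := NeZero.pos N; omega), rfl⟩
  rw [hkr]
  rcases lt_or_ge r K with h | h
  · have hmod : ∀ t : Fin N, (r + t) % (K + N) = r + t := fun t => Nat.mod_eq_of_lt (by omega)
    simpa only [hmod] using hind r
  · obtain ⟨u, hu, rfl⟩ : ∃ u < N, r = K + u := ⟨r - K, by omega, by omega⟩
    -- the window starting at `K + u` is the first window, rotated by `u`
    have hrot : ∀ t : Fin N, g ((K + u + t) % (K + N)) = g ((u + t : Fin N) : ℕ) := by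
      intro t
      rw [Fin.val_add, Fin.val_natCast, Nat.mod_eq_of_lt hu]
      rcases lt_or_ge (u + t) N with h' | h'
      · rw [Nat.mod_eq_of_lt (by omega), Nat.mod_eq_of_lt h', add_assoc, add_comm, hg]
      · rw [Nat.mod_eq_sub_mod (by omega), Nat.mod_eq_of_lt (by omega), Nat.mod_eq_sub_mod h',
          Nat.mod_eq_of_lt (by omega)]
        congr 1
        omega
    simp only [hrot]
    have hfirst : LinearIndependent F fun s : Fin N => g s := by simpa using hind 0
    exact hfirst.comp _ (add_right_injective _)

theorem IndepWindows.dual {K N d : ℕ} [NeZero K] {g : ℕ → Fin d → F} (hg : Periodic g K)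
    (hind : IndepWindows F g d) (hK : N + d = K) :
    ∃ h : ℕ → Fin N → F, Periodic h K ∧ IndepWindows F h N := by
  let T := Fintype.linearCombination F fun j : Fin K => g j
  let window (k : ℕ) : (Fin K → F) →ₗ[F] Fin N → F :=
    LinearMap.funLeft F F fun t : Fin N => ((k + t : ℕ) : Fin K)
  have hinj : ∀ k, Injective (window k ∘ₗ (LinearMap.ker T).subtype) := by
    intro k
    rw [← LinearMap.ker_eq_bot, LinearMap.ker_eq_bot']
    rintro ⟨x, hx⟩ hxk
    rw [LinearMap.mem_ker, Fintype.linearCombination_apply] at hx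
    exact Subtype.ext (hind.eq_zero hg hK hx k fun i hi => congrFun hxk ⟨i, hi⟩)
  have hrank : finrank F (LinearMap.ker T) = N := by
    refine le_antisymm (by simpa using LinearMap.finrank_le_finrank_of_injective (hinj 0)) ?_
    have hrange := Submodule.finrank_le (LinearMap.range T)
    have hsum := T.finrank_range_add_finrank_ker
    simp only [finrank_fin_fun] at hrange hsum
    omega
  let b := Module.finBasisOfFinrankEq F _ hrank
  refine ⟨(fun (j : Fin K) s => (b s : Fin K → F) j) ∘ Nat.cast,
    Periodic.comp (fun n => by simp) _, fun k => ?_⟩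
  let A : Matrix (Fin N) (Fin N) F := .of fun t s => (b s : Fin K → F) (k + t : ℕ)
  have hcols : LinearIndependent F A.col :=
    (b.linearIndependent.map' _ (LinearMap.ker_eq_bot.mpr (hinj k)) :)
  exact Matrix.linearIndependent_rows_iff_isUnit.mpr
    (Matrix.linearIndependent_cols_iff_isUnit.mp hcols)

end Windows

theorem exists_periodic_indepWindows (F : Type*) [Field F] {K N : ℕ} (hNK : N ≤ K) :
    ∃ g : ℕ → Fin N → F, Periodic g K ∧ IndepWindows F g N := by
  induction hs : K + N using Nat.strong_induction_on generalizing K N with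
  | _ s ih =>
  rcases N.eq_zero_or_pos with rfl | hN
  · exact ⟨0, fun _ => rfl, fun _ => linearIndependent_empty_type⟩
  have : NeZero N := ⟨hN.ne'⟩
  by_cases h2N : 2 * N ≤ K
  · obtain ⟨K', rfl⟩ : ∃ K', K = K' + N := ⟨K - N, by omega⟩
    obtain ⟨g, hg, hind⟩ := ih (K' + N) (by omega) (by omega) rfl
    exact ⟨_, (Nat.periodic_mod _).comp g, hind.append hg⟩
  · have : NeZero K := ⟨by omega⟩
    obtain ⟨g, hg, hind⟩ := ih (K + (K - N)) (by omega) (N := K - N) (by omega) rfl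
    exact hind.dual hg (by omega)

def cyclicSide (K D : ℕ) [NeZero K] (k : Fin K) (t : Fin D) : Fin K := ((k + 1 + t : ℕ) : Fin K)

theorem isIndexCode_cyclicSide {F V : Type*} [Field F] [AddCommGroup V] [Module F V]
    {K D d : ℕ} [NeZero K] {g : ℕ → V} (hg : Periodic g K) (hind : IndepWindows F g d)
    (hdK : d ≤ K) (hKD : K ≤ D + d) :
    IsIndexCode (cyclicSide K D) (Fintype.linearCombination F fun j : Fin K => g j) := by
  rw [isIndexCode_iff]
  intro k x hx hside
  rw [Fintype.linearCombination_apply] at hx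
  rw [hind.eq_zero hg (N := K - d) (by omega) hx (k + 1) fun i hi => hside ⟨i, by omega⟩]
  rfl

/-- The optimal scalar linear index code length for the one-sided SNC-SUICP with K
messages and D ≤ K−2 side-information is exactly K − D, over every field. -/
theorem stmt10 (K D : ℕ) (hK : 2 ≤ K)
    (F : Type) [Field F] :
    IsLeast {N : ℕ | ∃ E : (Fin K → F) →ₗ[F] (Fin N → F),
      ∀ k : Fin K, ∃ dec : (Fin N → F) → (Fin D → F) → F,
        ∀ x : Fin K → F,
          dec (E x) (fun t => x ⟨((k : ℕ) + 1 + (t : ℕ)) % K, Nat.mod_lt _ (by omega)⟩)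
            = x k} (K - D) := by
  have : NeZero K := ⟨by omega⟩
  refine ⟨?_, fun N ⟨E, hE⟩ => ?_⟩
  · obtain ⟨g, hg, hind⟩ := exists_periodic_indepWindows F (K := K) (N := K - D) (by omega)
    exact ⟨_, isIndexCode_cyclicSide hg hind (by omega) (by omega)⟩
  · have hforward : ∀ k : Fin K, (k : ℕ) < K - D → ∀ t, k < cyclicSide K D k t := by
      intro k hk t
      simp only [cyclicSide, Fin.lt_def, Fin.val_natCast]
      rw [Nat.mod_eq_of_lt (by omega)]
      omega
    simpa [Fin.card_filter_val_lt] using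
      IsIndexCode.card_le (side := cyclicSide K D) hE {j : Fin K | (j : ℕ) < K - D}
        fun k hk t _ => hforward k (by simpa using hk) t
end

section
/- Let K=10, D=3, and consider over F₂ the index code c₀=x₀+x₇, c₁=x₁+x₈, c₂=x₂+x₉, c₃=x₃+x₇, c₄=x₄+x₈, c₅=x₅+x₉, c₆=x₆+x₇+x₈+x₉. Then every receiver R_k (demanding x_k with side-information {x_{k+1},...,x_{k+3}}, indices mod 10) can recover x_k from (c₀,...,c₆) and its side-information, and no linear code of length 6 over F₂ achieves this. -/
/-!
Decodability of the seven-symbol code is checked receiver by receiver with explicit decoders.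
For optimality, note that a decodable encoding `E` together with `x₀, …, x_{D-1}` determines the
whole message: receiver `K - 1` decodes `x_{K-1}` from `E x` and `x₀, …, x_{D-1}`, then receiver
`K - 2` decodes `x_{K-2}`, and so on down to `x_D`. Hence `q ^ K ≤ |codewords| * q ^ D`, which for
`q = 2`, `K = 10`, `D = 3` rules out `2 ^ 6` codewords.
-/

def cyclicSideInfo {α : Type*} {K : ℕ} [NeZero K] (D : ℕ) (k : Fin K) (x : Fin K → α) :
    Fin D → α :=
  fun t => x ⟨((k : ℕ) + 1 + (t : ℕ)) % K, Nat.mod_lt _ (NeZero.pos K)⟩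

def IsCyclicDecodable {α β : Type*} {K : ℕ} [NeZero K] (D : ℕ) (E : (Fin K → α) → β) : Prop :=
  ∀ k : Fin K, ∃ dec : β → (Fin D → α) → α, ∀ x, dec (E x) (cyclicSideInfo D k x) = x k

section CyclicIndexCoding

variable {α β : Type*} {K D : ℕ} [NeZero K] {E : (Fin K → α) → β}

theorem IsCyclicDecodable.eq_of_forall_lt (hE : IsCyclicDecodable D E) {x y : Fin K → α}
    (hxy : E x = E y) (hlow : ∀ i : Fin K, (i : ℕ) < D → x i = y i) : x = y := by
  suffices h : ∀ j, ∀ i : Fin K, (i : ℕ) < D ∨ K ≤ i + j → x i = y i from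
    funext fun i => h K i (.inr (Nat.le_add_left _ _))
  intro j
  induction j with
  | zero => exact fun i hi => hlow i (hi.resolve_right (by omega))
  | succ j ih =>
    rintro i (hi | hi)
    · exact hlow i hi
    by_cases hij : K ≤ i + j
    · exact ih i (.inr hij)
    -- now `i = K - 1 - j`, and every side-information position of receiver `i` is either
    -- above `i` or wraps around into the first `D` positions
    obtain ⟨dec, hdec⟩ := hE i
    have hside : cyclicSideInfo D i x = cyclicSideInfo D i y := by
      funext t
      refine ih _ ?_
      show ((i : ℕ) + 1 + t) % K < D ∨ K ≤ ((i : ℕ) + 1 + t) % K + j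
      by_cases hwrap : (i : ℕ) + 1 + t < K
      · rw [Nat.mod_eq_of_lt hwrap]; omega
      · rw [Nat.mod_eq_sub_mod (not_lt.mp hwrap)]
        have := Nat.mod_le ((i : ℕ) + 1 + t - K) K
        omega
    rw [← hdec x, ← hdec y, hxy, hside]

theorem IsCyclicDecodable.card_pow_le [Fintype α] [Fintype β] (hDK : D ≤ K)
    (hE : IsCyclicDecodable D E) :
    Fintype.card α ^ K ≤ Fintype.card β * Fintype.card α ^ D := by
  have hinj : Function.Injective fun x : Fin K → α => (E x, x ∘ Fin.castLE hDK) := by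
    intro x y hxy
    obtain ⟨hExy, hlow⟩ := Prod.mk.inj hxy
    exact hE.eq_of_forall_lt hExy fun i hi => congrFun hlow ⟨i, hi⟩
  simpa using Fintype.card_le_of_injective _ hinj

end CyclicIndexCoding

def sevenSymbolCode (x : Fin 10 → ZMod 2) : Fin 7 → ZMod 2 :=
  ![x 0 + x 7, x 1 + x 8, x 2 + x 9, x 3 + x 7, x 4 + x 8, x 5 + x 9, x 6 + x 7 + x 8 + x 9]

def sevenSymbolDecoder : Fin 10 → (Fin 7 → ZMod 2) → (Fin 3 → ZMod 2) → ZMod 2 :=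
  ![fun c s => c 0 + c 3 + s 2, fun c s => c 1 + c 4 + s 2, fun c s => c 2 + c 5 + s 2,
    fun c s => c 3 + c 4 + c 5 + c 6 + s 0 + s 1 + s 2,
    fun c s => c 4 + c 5 + c 6 + s 0 + s 1 + s 2,
    fun c s => c 5 + c 6 + s 0 + s 1 + s 2,
    fun c s => c 6 + s 0 + s 1 + s 2,
    fun c s => c 0 + s 2, fun c s => c 1 + s 2, fun c s => c 2 + s 2]

theorem sevenSymbolDecoder_spec (k : Fin 10) (x : Fin 10 → ZMod 2) :
    sevenSymbolDecoder k (sevenSymbolCode x) (cyclicSideInfo 3 k x) = x k := by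
  fin_cases k <;>
    simp only [sevenSymbolDecoder, sevenSymbolCode, cyclicSideInfo, Matrix.cons_val,
      Matrix.cons_val_zero, Matrix.cons_val_one, Fin.isValue, Fin.coe_ofNat_eq_mod,
      Nat.reduceAdd, Nat.reduceMod, Fin.reduceFinMk] <;>
    grind

theorem not_isCyclicDecodable_of_length_six (E : (Fin 10 → ZMod 2) → (Fin 6 → ZMod 2)) :
    ¬ IsCyclicDecodable 3 E := fun hE => by
  simpa [ZMod.card] using hE.card_pow_le (by norm_num)

/-- For K = 10, D = 3 over F₂, the 7-symbol code of Example 1 is decodable by every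
receiver, and no linear code of length 6 achieves this. -/
theorem stmt11 :
    (∀ k : Fin 10, ∃ dec : (Fin 7 → ZMod 2) → (Fin 3 → ZMod 2) → ZMod 2,
      ∀ x : Fin 10 → ZMod 2,
        dec ![x 0 + x 7, x 1 + x 8, x 2 + x 9, x 3 + x 7, x 4 + x 8, x 5 + x 9,
              x 6 + x 7 + x 8 + x 9]
          (fun t => x ⟨((k : ℕ) + 1 + (t : ℕ)) % 10, Nat.mod_lt _ (by omega)⟩) = x k) ∧
    ¬ ∃ E : (Fin 10 → ZMod 2) →ₗ[ZMod 2] (Fin 6 → ZMod 2),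
        ∀ k : Fin 10, ∃ dec : (Fin 6 → ZMod 2) → (Fin 3 → ZMod 2) → ZMod 2,
          ∀ x : Fin 10 → ZMod 2,
            dec (E x)
              (fun t => x ⟨((k : ℕ) + 1 + (t : ℕ)) % 10, Nat.mod_lt _ (by omega)⟩)
              = x k := by
  refine ⟨fun k => ⟨sevenSymbolDecoder k, sevenSymbolDecoder_spec k⟩, ?_⟩
  rintro ⟨E, hE⟩
  exact not_isCyclicDecodable_of_length_six E hE
end

section
/- Let K=13, D=3, and consider over F₂ the code c_k = x_k + x_{10 + (k mod 3)} for k ∈ [0,8] and c₉ = x₉ + x₁₀ + x₁₁ + x₁₂. Then: (a) for k ∈ [0,5], x_k = c_k + c_{k+3} + x_{k+3}; (b) x₆ = c₆+c₇+c₈+c₉ + x₇+x₈+x₉; (c) x₇ = c₇+c₈+c₉ + x₈+x₉+x₁₀; (d) x₈ = c₈+c₉ + x₉+x₁₀+x₁₁; (e) x₉ = c₉ + x₁₀+x₁₁+x₁₂; (f) for k ∈ [10,12], x_k = c_{k−10} + x_{k−10}. -/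
/-! Over a ring of characteristic 2 every element is its own negative, so adding two code
symbols cancels the side information they share. For `k < 6` the symbols `c k` and `c (k + 3)`
share `x (10 + k % 3)`, and `c (k - 10)` is `x (k - 10)` masked by `x k` alone; the remaining
identities combine the last four code equations in the same way. -/

namespace CharTwo

variable {R : Type*} [Ring R] [CharP R 2] {a b u v y : R}

theorem eq_add_of_eq_add (hu : u = a + y) : y = u + a := by
  rw [hu, add_right_comm, add_self_eq_zero, zero_add]

theorem eq_add_add_of_eq_add_of_eq_add (hu : u = a + y) (hv : v = b + y) : a = u + v + b := by
  rw [hu, hv, add_add_add_comm, add_self_eq_zero, add_zero, CharTwo.add_cancel_right]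

end CharTwo

/-- For K = 13, D = 3 over F₂: the decoding identities (a)–(f) of every receiver. -/
theorem stmt13 (x : Fin 13 → ZMod 2) (c : Fin 10 → ZMod 2)
    (hc : ∀ i : ℕ, (hi : i < 9) →
      c ⟨i, by omega⟩ = x ⟨i, by omega⟩ + x ⟨10 + i % 3, by omega⟩)
    (hc9 : c 9 = x 9 + x 10 + x 11 + x 12) :
    (∀ k : ℕ, (hk : k < 6) →
      x ⟨k, by omega⟩ = c ⟨k, by omega⟩ + c ⟨k + 3, by omega⟩ + x ⟨k + 3, by omega⟩) ∧
    x 6 = c 6 + c 7 + c 8 + c 9 + x 7 + x 8 + x 9 ∧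
    x 7 = c 7 + c 8 + c 9 + x 8 + x 9 + x 10 ∧
    x 8 = c 8 + c 9 + x 9 + x 10 + x 11 ∧
    x 9 = c 9 + x 10 + x 11 + x 12 ∧
    (∀ k : ℕ, (hk1 : 10 ≤ k) → (hk2 : k ≤ 12) →
      x ⟨k, by omega⟩ = c ⟨k - 10, by omega⟩ + x ⟨k - 10, by omega⟩) := by
  have h6 : c 6 = x 6 + x 10 := hc 6 (by norm_num)
  have h7 : c 7 = x 7 + x 11 := hc 7 (by norm_num)
  have h8 : c 8 = x 8 + x 12 := hc 8 (by norm_num)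
  refine ⟨fun k hk => ?_, by grind, by grind, by grind, by grind, fun k hk1 hk2 => ?_⟩
  · have hshift : x ⟨10 + (k + 3) % 3, by omega⟩ = x ⟨10 + k % 3, by omega⟩ :=
      congrArg x (Fin.ext (by simp))
    exact CharTwo.eq_add_add_of_eq_add_of_eq_add (hc k (by omega))
      ((hc (k + 3) (by omega)).trans (by rw [hshift]))
  · have hmask : x ⟨10 + (k - 10) % 3, by omega⟩ = x ⟨k, by omega⟩ :=
      congrArg x (Fin.ext (by simp only; omega))
    exact CharTwo.eq_add_of_eq_add ((hc (k - 10) (by omega)).trans (by rw [hmask]))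
end

section
/- Let L be the (K,D) AIR matrix, k ∈ [0, K−D−λ_l−1], and suppose k lies in the set D_i = [K−D−λ_{2i−1}, K−D−λ_{2i−1}+(β_{2i}−1)λ_{2i}−1] with k mod (K−D−λ_{2i−1}) = cλ_{2i}+d, 0 ≤ d < λ_{2i}. Let μ_k = λ_{2i} be the right-distance of L(k+d_down(k), k). Then d_down(k) − d_up(k+d_down(k), k+μ_k) = D, i.e., the sum of columns k and k+μ_k of L contains, besides x_k, only entries corresponding to indices in {k+1,...,k+D} (mod K). -/
/-!
The K × n AIR matrix consists of stacked n × n identity blocks, below them a row of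
(K mod n) × (K mod n) identity blocks, and in the bottom-right corner the AIR matrix of size
(K mod n) × (n mod (K mod n)); passing to the corner moves two steps along the Euclidean chain.
For k ∈ D_i there is a row R such that the lowest 1 of column k is in row R and the nearest 1
above row R in column k + μ is in row k + D, so that d_down(k) = R − k and
d_up(k + d_down(k), k + μ) = R − (k + D). By induction on i: for i = 0 both columns lie left of
the corner, R = K − μ + (k mod μ) is in the bottom block and row k + D in the last identity
block; for i > 0 both columns lie in the corner, where the claim is the one for i − 1.
-/

def IsLowestOne (K n R c : ℕ) : Prop :=
  R < K ∧ airEntry K n R c = true ∧ ∀ j, R < j → j < K → airEntry K n j c = false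

def IsNearestOneAbove (K n r R c : ℕ) : Prop :=
  r < R ∧ airEntry K n r c = true ∧ ∀ j, r < j → j < R → airEntry K n j c = false

lemma ddown_eq_of_isLowestOne {K n k R : ℕ} (hkR : k < R) (h : IsLowestOne K n R k) :
    ddown K n k = R - k := by
  obtain ⟨hRK, hR, hbelow⟩ := h
  refine IsGreatest.csSup_eq ⟨⟨by omega, by omega, by rwa [Nat.add_sub_cancel' hkR.le]⟩, ?_⟩
  rintro t ⟨-, htK, ht⟩
  by_contra! hlt
  simp [hbelow (k + t) (by omega) htK] at ht

lemma dup_eq_of_isNearestOneAbove {K n r R c : ℕ} (h : IsNearestOneAbove K n r R c) :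
    dup K n R c = R - r := by
  obtain ⟨hrR, hr, hbetween⟩ := h
  have hmax : IsGreatest {j | j < R ∧ airEntry K n j c = true} r := by
    refine ⟨⟨hrR, hr⟩, ?_⟩
    rintro j ⟨hjR, hj⟩
    by_contra! hlt
    simp [hbetween j hlt hjR] at hj
  rw [dup, hmax.csSup_eq]

section Blocks

variable {K n j c : ℕ}

lemma airEntry_top_s14 (hn : 0 < n) (hnK : n < K) (hj : j < K - K % n) :
    airEntry K n j c = decide (j % n = c % n) := by
  rw [airEntry, dif_neg (by omega), if_pos hj]

lemma airEntry_bottomLeft (hn : 0 < n) (hnK : n < K) (hj : K - K % n ≤ j)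
    (hc : c < n - n % (K % n)) :
    airEntry K n j c = decide (c % (K % n) = j - (K - K % n)) := by
  rw [airEntry, dif_neg (by omega), if_neg (by omega), if_pos hc]

lemma airEntry_bottomRight_s14 (hn : 0 < n) (hnK : n < K) (hj : K - K % n ≤ j)
    (hc : n - n % (K % n) ≤ c) :
    airEntry K n j c =
      airEntry (K % n) (n % (K % n)) (j - (K - K % n)) (c - (n - n % (K % n))) := by
  rw [airEntry, dif_neg (by omega), if_neg (by omega), if_neg (by omega)]

lemma IsLowestOne.bottomRight (hn : 0 < n) (hnK : n < K) {R : ℕ}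
    (h : IsLowestOne (K % n) (n % (K % n)) R c) :
    IsLowestOne K n (K - K % n + R) (n - n % (K % n) + c) := by
  have hc0 : K % n ≤ K := Nat.mod_le K n
  obtain ⟨hRK, hR, hbelow⟩ := h
  refine ⟨by omega, ?_, fun j hj hjK => ?_⟩
  · rwa [airEntry_bottomRight_s14 hn hnK (by omega) (by omega), Nat.add_sub_cancel_left,
      Nat.add_sub_cancel_left]
  · rw [airEntry_bottomRight_s14 hn hnK (by omega) (by omega), Nat.add_sub_cancel_left]
    exact hbelow _ (by omega) (by omega)

lemma IsNearestOneAbove.bottomRight (hn : 0 < n) (hnK : n < K) {r R : ℕ}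
    (h : IsNearestOneAbove (K % n) (n % (K % n)) r R c) :
    IsNearestOneAbove K n (K - K % n + r) (K - K % n + R) (n - n % (K % n) + c) := by
  obtain ⟨hrR, hr, hbetween⟩ := h
  refine ⟨by omega, ?_, fun j hj hjR => ?_⟩
  · rwa [airEntry_bottomRight_s14 hn hnK (by omega) (by omega), Nat.add_sub_cancel_left,
      Nat.add_sub_cancel_left]
  · rw [airEntry_bottomRight_s14 hn hnK (by omega) (by omega), Nat.add_sub_cancel_left]
    exact hbetween _ (by omega) (by omega)

end Blocks

lemma lamPair_snd_antitone (K D : ℕ) : Antitone fun m => (lamPair K D m).2 := by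
  refine antitone_nat_of_succ_le fun m => ?_
  simp only [lamPair]
  split_ifs with h
  · exact Nat.zero_le _
  · exact (Nat.mod_lt _ (Nat.pos_of_ne_zero h)).le

lemma lamPair_add_succ (a b m : ℕ) (hb : b ≠ 0) :
    lamPair (a + b) b (m + 1) = lamPair (b + a % b) (a % b) m := by
  induction m with
  | zero => simp [lamPair, hb]
  | succ m ih => rw [lamPair, ih]; rfl

lemma lamPair_add_fst_le {a b : ℕ} (hba : b ≤ a) : ∀ m, (lamPair (a + b) b m).1 ≤ a
  | 0 => by simp [lamPair]
  | m + 1 => (lamPair_snd_antitone (a + b) b (Nat.zero_le m)).trans (by simpa [lamPair])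

lemma lamPair_add_two_steps {a b m : ℕ} (h : 0 < (lamPair (a + b) b (2 * (m + 1))).2) :
    b ≠ 0 ∧ a % b ≠ 0 ∧
      lamPair (a + b) b (2 * (m + 1)) = lamPair (a % b + b % (a % b)) (b % (a % b)) (2 * m) := by
  have h₁ := (lamPair_snd_antitone (a + b) b (show 1 ≤ 2 * (m + 1) by omega)).trans_lt' h
  have hb : b ≠ 0 := by rintro rfl; simp [lamPair] at h₁
  have hab : a % b ≠ 0 := by intro hab; simp [lamPair, hb, hab] at h₁
  refine ⟨hb, hab, ?_⟩
  rw [show 2 * (m + 1) = 2 * m + 1 + 1 by ring, lamPair_add_succ a b _ hb,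
    lamPair_add_succ b (a % b) _ hab]

lemma le_sub_mod_self {K n : ℕ} (hn : 0 < n) (hnK : n < K) : n ≤ K - K % n := by
  rw [← Nat.mul_div_self_eq_mod_sub_self]
  exact Nat.le_mul_of_pos_right n (Nat.div_pos hnK.le hn)

lemma exists_isLowestOne_isNearestOneAbove_left {K n k : ℕ} (hn : 0 < n) (hnK : n < K)
    (hc : 0 < K % n) (hk : k + K % n < n - n % (K % n)) :
    ∃ R, k + (K - n) < R ∧ IsLowestOne K n R k ∧
      IsNearestOneAbove K n (k + (K - n)) R (k + K % n) := by
  have hnq := le_sub_mod_self hn hnK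
  have hkc : k % (K % n) < K % n := Nat.mod_lt k hc
  have hrow : (k + (K - n)) % n = (k + K % n) % n := by
    have : k + (K - n) = k + K % n + n * (K / n - 1) := by
      rw [Nat.mul_sub_one, Nat.mul_div_self_eq_mod_sub_self]; omega
    rw [this, Nat.add_mul_mod_self_left]
  refine ⟨K - K % n + k % (K % n), by omega, ⟨by omega, ?_, fun j hj hjK => ?_⟩,
    ⟨by omega, ?_, fun j hj hjR => ?_⟩⟩
  · rw [airEntry_bottomLeft hn hnK (by omega) (by omega)]
    simp
  · rw [airEntry_bottomLeft hn hnK (by omega) (by omega)]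
    simp only [decide_eq_false_iff_not]
    omega
  · rw [airEntry_top_s14 hn hnK (by omega), hrow]
    simp
  · by_cases hjtop : j < K - K % n
    · rw [airEntry_top_s14 hn hnK hjtop, ← hrow]
      simp only [decide_eq_false_iff_not]
      intro hmod
      have := Nat.ModEq.eq_of_abs_lt hmod.symm (by rw [abs_lt]; constructor <;> omega)
      omega
    · rw [airEntry_bottomLeft hn hnK (by omega) hk, Nat.add_mod_right]
      simp only [decide_eq_false_iff_not]
      omega

lemma pos_and_two_mul_le_of_mem_window {m a μ k : ℕ} (hk1 : m - a ≤ k)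
    (hk2 : k < m - a + (a / μ - 1) * μ) : 0 < μ ∧ 2 * μ ≤ a := by
  have hμ : 0 < μ := Nat.pos_of_ne_zero (by rintro rfl; simp only [mul_zero, add_zero] at hk2; omega)
  refine ⟨hμ, (Nat.le_div_iff_mul_le hμ).1 ?_⟩
  by_contra! hβ
  rw [show a / μ - 1 = 0 by omega, zero_mul] at hk2
  omega

-- `lamPair (n + K % n) (K % n)` is the Euclidean chain started at (n, K mod n).
theorem exists_isLowestOne_isNearestOneAbove (K n i k a μ : ℕ) (hn : 0 < n) (hnK : n < K)
    (hchain : lamPair (n + K % n) (K % n) (2 * i) = (a, μ))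
    (hk1 : n - a ≤ k) (hk2 : k < n - a + (a / μ - 1) * μ) :
    ∃ R, k + (K - n) < R ∧ IsLowestOne K n R k ∧
      IsNearestOneAbove K n (k + (K - n)) R (k + μ) := by
  induction K using Nat.strong_induction_on generalizing n i k with
  | _ K ih =>
  have hμ := (pos_and_two_mul_le_of_mem_window hk1 hk2).1
  cases i with
  | zero =>
    simp only [lamPair, Nat.add_sub_cancel, Prod.mk.injEq] at hchain
    obtain ⟨rfl, rfl⟩ := hchain
    refine exists_isLowestOne_isNearestOneAbove_left hn hnK hμ ?_
    have := Nat.div_add_mod' n (K % n)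
    rw [Nat.sub_one_mul] at hk2
    omega
  | succ j =>
    obtain ⟨hc₀, hc₁, hshift⟩ := lamPair_add_two_steps (by rwa [hchain])
    rw [hshift] at hchain
    have ha : a ≤ n % (K % n) := by
      simpa [hchain] using
        lamPair_add_fst_le (Nat.mod_lt (K % n) (Nat.pos_of_ne_zero hc₁)).le (2 * j)
    have hc₀n : K % n < n := Nat.mod_lt K hn
    have hc₁c₀ : n % (K % n) < K % n := Nat.mod_lt n (Nat.pos_of_ne_zero hc₀)
    have hnK' := le_sub_mod_self hn hnK
    obtain ⟨R, hR, hlow, habove⟩ := ih (K % n) (by omega) (n % (K % n)) j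
      (k - (n - n % (K % n))) (by omega) hc₁c₀ hchain (by omega) (by omega)
    have hlow' := hlow.bottomRight hn hnK
    have habove' := habove.bottomRight hn hnK
    rw [Nat.add_sub_cancel' (by omega)] at hlow'
    rw [show K - K % n + (k - (n - n % (K % n)) + (K % n - n % (K % n))) = k + (K - n) by omega,
      show n - n % (K % n) + (k - (n - n % (K % n)) + μ) = k + μ by omega] at habove'
    exact ⟨K - K % n + R, by omega, hlow', habove'⟩

-- For D > K − D the chain of (K − D, D) runs (K − D, D, K − D, K mod (K − D), …).
lemma exists_lamPair_eq_lamPair_mod {K D i : ℕ} (hDK : D < K) (hμ : 0 < (lamPair K D (2 * i)).2)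
    (h2μ : 2 * (lamPair K D (2 * i)).2 ≤ (lamPair K D (2 * i)).1) :
    ∃ j, lamPair K D (2 * i) = lamPair (K - D + K % (K - D)) (K % (K - D)) (2 * j) := by
  obtain ⟨n, rfl⟩ : ∃ n, K = n + D := ⟨K - D, by omega⟩
  rw [Nat.add_sub_cancel, Nat.add_mod_left]
  rcases lt_or_ge D n with hDn | hnD
  · exact ⟨i, by rw [Nat.mod_eq_of_lt hDn]⟩
  · cases i with
    | zero => simp only [lamPair, add_tsub_cancel_right] at h2μ; omega
    | succ j =>
      obtain ⟨-, hn, hshift⟩ := lamPair_add_two_steps hμ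
      have hnD' : n < D := lt_of_le_of_ne hnD (by rintro rfl; simp at hn)
      exact ⟨j, by rw [hshift, Nat.mod_eq_of_lt hnD']⟩

theorem stmt14_general (K D i k : ℕ) (hD : 0 < D) (hDK : D < K)
    (hk1 : K - D - lamS K D (2 * i) ≤ k)
    (hk2 : k < K - D - lamS K D (2 * i) + (beta K D (2 * i) - 1) * lam K D (2 * i)) :
    ddown K (K - D) k - dup K (K - D) (k + ddown K (K - D) k) (k + lam K D (2 * i)) = D := by
  obtain ⟨hμ, h2μ⟩ := pos_and_two_mul_le_of_mem_window hk1 hk2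
  obtain ⟨j, hj⟩ := exists_lamPair_eq_lamPair_mod hDK hμ h2μ
  obtain ⟨R, hkR, hlow, habove⟩ :=
    exists_isLowestOne_isNearestOneAbove K (K - D) j k (lamS K D (2 * i)) (lam K D (2 * i))
      (by omega) (by omega) hj.symm hk1 hk2
  rw [ddown_eq_of_isLowestOne (by omega) hlow, Nat.add_sub_cancel' (by omega),
    dup_eq_of_isNearestOneAbove habove]
  omega

/-- Case (i) of Theorem 2: for k ∈ D_i, with μ_k = λ_{2i},
d_down(k) − d_up(k + d_down(k), k + μ_k) = D. -/
theorem stmt14 (K D l i k c d : ℕ) (hD : 0 < D) (hDK : D < K)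
    (hl : lam K D (l + 1) = 0) (hmin : ∀ j ≤ l, lam K D j ≠ 0)
    (hi : i ≤ (l + 1) / 2)
    (hkl : k < K - D - lam K D l)
    (hk1 : K - D - lamS K D (2 * i) ≤ k)
    (hk2 : k < K - D - lamS K D (2 * i) + (beta K D (2 * i) - 1) * lam K D (2 * i))
    (hcd : k % (K - D - lamS K D (2 * i)) = c * lam K D (2 * i) + d)
    (hd : d < lam K D (2 * i)) :
    ddown K (K - D) k - dup K (K - D) (k + ddown K (K - D) k) (k + lam K D (2 * i)) = D :=
  stmt14_general K D i k hD hDK hk1 hk2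
end

section
/- Let L be the (K,D) AIR matrix, k ∈ E_i for i ∈ [0, ⌈l/2⌉−1], with k_R = (β_{2i}−1)λ_{2i} + cλ_{2i+1} + d, 0 ≤ d < λ_{2i+1}. Let t_{k,1} < ... < t_{k,p_k} be the r-th down-distances of L(k+d_down(k), k+μ_k), where μ_k = λ_{2i} − cλ_{2i+1}. Then t_{k,p_k} < μ_k − d; in particular t_{k,p_k} < μ_k. -/
/-- One level of the recursion in `airEntry`: from the `a × b` matrix to its bottom-right
sub-matrix of size `a % b × b % (a % b)`. -/
def AirStep (p q : ℕ × ℕ) : Prop :=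
  0 < p.2 ∧ p.2 < p.1 ∧ q = (p.1 % p.2, p.2 % (p.1 % p.2))

lemma airEntry_eq_of_le {A B j k : ℕ} (hB : 0 < B) (hBA : B < A)
    (hj : A - A % B ≤ j) (hk : B - B % (A % B) ≤ k) :
    airEntry A B j k
      = airEntry (A % B) (B % (A % B)) (j - (A - A % B)) (k - (B - B % (A % B))) := by
  rw [airEntry, dif_neg (by omega), if_neg (by omega), if_neg (by omega)]

lemma airEntry_eq_decide {A B j k : ℕ} (hB : 0 < B) (hBA : B < A)
    (hj : A - A % B ≤ j) (hk : k < B - B % (A % B)) :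
    airEntry A B j k = decide (k % (A % B) = j - (A - A % B)) := by
  rw [airEntry, dif_neg (by omega), if_neg (by omega), if_pos hk]

lemma AirStep.le_of_reflTransGen {p q : ℕ × ℕ} (h : Relation.ReflTransGen AirStep p q) :
    q.1 ≤ p.1 ∧ q.2 ≤ p.2 := by
  induction h with
  | refl => exact ⟨le_rfl, le_rfl⟩
  | tail _ hstep ih =>
    obtain ⟨-, -, rfl⟩ := hstep
    exact ⟨(Nat.mod_le _ _).trans ih.1, (Nat.mod_le _ _).trans ih.2⟩

lemma airEntry_corner_eq {p q : ℕ × ℕ} (h : Relation.ReflTransGen AirStep p q) :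
    ∀ j < q.1, ∀ k < q.2,
      airEntry p.1 p.2 (p.1 - q.1 + j) (p.2 - q.2 + k) = airEntry q.1 q.2 j k := by
  induction h with
  | refl => intro j _ k _; simp
  | @tail q q' hpq hstep ih =>
    obtain ⟨a, b⟩ := q
    obtain ⟨hb, hba, rfl⟩ := hstep
    intro j hj k hk
    dsimp only at hb hba hj hk ⊢
    obtain ⟨haA, hbB⟩ := AirStep.le_of_reflTransGen hpq
    dsimp only at haA hbB
    have ha' := Nat.mod_le a b
    have hb' := Nat.mod_le b (a % b)
    have := ih (a - a % b + j) (by omega) (b - b % (a % b) + k) (by omega)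
    dsimp only at this
    rw [show p.1 - a + (a - a % b + j) = p.1 - a % b + j by omega,
      show p.2 - b + (b - b % (a % b) + k) = p.2 - b % (a % b) + k by omega] at this
    rw [this, airEntry_eq_of_le hb hba (by omega) (by omega)]
    congr 1 <;> omega

lemma airEntry_eq_true_of_reflTransGen {A B a b k : ℕ}
    (h : Relation.ReflTransGen AirStep (A, B) (a, b)) (hb : 0 < b) (hba : b < a)
    (hk : k < b - b % (a % b)) :
    airEntry A B (A - a % b + k % (a % b)) (B - b + k) = true := by
  have hr : 0 < a % b := Nat.pos_of_ne_zero fun h0 => by simp [h0] at hk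
  have haA := (AirStep.le_of_reflTransGen h).1
  have := airEntry_corner_eq h (a - a % b + k % (a % b))
    (by have := Nat.mod_lt k hr; have := Nat.mod_le a b; omega) k (by omega)
  dsimp only at this
  rw [show A - a + (a - a % b + k % (a % b)) = A - a % b + k % (a % b) by
    have := Nat.mod_le a b; omega] at this
  rw [this, airEntry_eq_decide hb hba (Nat.le_add_right _ _) hk]
  simp

lemma le_ddown {K n k u : ℕ} (hu : 0 < u) (hkK : k + u < K)
    (h : airEntry K n (k + u) k = true) : u ≤ ddown K n k :=
  le_csSup ⟨K, fun _ hx => by have := hx.2.1; omega⟩ ⟨hu, hkK, h⟩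

lemma lamS_succ (K D j : ℕ) : lamS K D (j + 1) = lam K D j := rfl

lemma lam_succ {K D j : ℕ} (h : lam K D j ≠ 0) : lam K D (j + 1) = lamS K D j % lam K D j := by
  simp only [lam, lamS, lamPair] at h ⊢
  rw [if_neg h]

lemma lamS_eq {K D j : ℕ} (h : lam K D j ≠ 0) :
    lamS K D j = beta K D j * lam K D j + lam K D (j + 1) := by
  rw [lam_succ h, beta]
  exact (Nat.div_add_mod' _ _).symm

lemma lam_one_of_le {K D : ℕ} (hD : 0 < D) (hle : K - D ≤ D) (h1 : lam K D 1 ≠ 0) :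
    lam K D 1 = K - D := by
  have hlam0 : lam K D 0 ≠ 0 := hD.ne'
  have hmod : lam K D 1 = (K - D) % D := lam_succ hlam0
  rw [hmod, Nat.mod_eq_of_lt (lt_of_le_of_ne hle fun h => h1 (by rw [hmod, h, Nat.mod_self]))]

/-- The states of the recursion in `airEntry` that sit just above the level `λ_s` of the
Euclidean chain: Euclid's step sends them to `(λ_{s-1}, λ_s)`. -/
def AboveLam (K D s : ℕ) (p : ℕ × ℕ) : Prop :=
  p.2 < p.1 ∧ p.2 = lamS K D s ∧ p.1 % p.2 = lam K D s

lemma exists_reflTransGen_aboveLam {K D s : ℕ} (m : ℕ) {p : ℕ × ℕ} (hp : AboveLam K D s p)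
    (hp0 : 0 < p.2) (hlam : ∀ j ≤ s + 2 * m, lam K D j ≠ 0) :
    ∃ q, Relation.ReflTransGen AirStep p q ∧ AboveLam K D (s + 2 * m) q := by
  induction m generalizing s p with
  | zero => exact ⟨p, .refl, hp⟩
  | succ m ih =>
    obtain ⟨hlt, h2, h1⟩ := hp
    have hs := hlam s (by omega)
    have hs1 := hlam (s + 1) (by omega)
    have hstep : AirStep p (lam K D s, lam K D (s + 1)) :=
      ⟨hp0, hlt, by rw [h1, lam_succ hs, h2]⟩
    have habove : AboveLam K D (s + 2) (lam K D s, lam K D (s + 1)) :=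
      ⟨by rw [lam_succ hs]; exact Nat.mod_lt _ (Nat.pos_of_ne_zero hs),
        rfl, by rw [lam_succ hs1]; rfl⟩
    obtain ⟨q, hq, hqa⟩ :=
      ih habove (Nat.pos_of_ne_zero hs1) (fun j hj => hlam j (by omega))
    exact ⟨q, .head hstep hq, by rwa [show s + 2 + 2 * m = s + 2 * (m + 1) by ring] at hqa⟩

/-- The AIR matrix itself sits above `λ_0` when `D < K - D`, and above `λ_2` otherwise
(then `λ_1 = K - D`). -/
lemma exists_reflTransGen_aboveLam_two_mul {K D i : ℕ} (hD : 0 < D) (hDK : D < K)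
    (hlam : ∀ j ≤ 2 * i, lam K D j ≠ 0) (hi : D < K - D ∨ 0 < i) :
    ∃ q, Relation.ReflTransGen AirStep (K, K - D) q ∧ AboveLam K D (2 * i) q := by
  have hKmod : K % (K - D) = D % (K - D) := by
    simpa [Nat.add_sub_cancel' hDK.le] using Nat.add_mod_right D (K - D)
  rcases Nat.lt_or_ge D (K - D) with hlt | hge
  · have hK : K % (K - D) = lam K D 0 := by rw [hKmod, Nat.mod_eq_of_lt hlt]; rfl
    simpa only [Nat.zero_add] using exists_reflTransGen_aboveLam (s := 0) (p := (K, K - D)) i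
      ⟨by omega, rfl, hK⟩ (by omega) (fun j hj => hlam j (by omega))
  · obtain ⟨i, rfl⟩ : ∃ i', i = i' + 1 := Nat.exists_eq_add_one.mpr (by omega)
    have hlam1 := lam_one_of_le hD hge (hlam 1 (by omega))
    have hS2 : lamS K D 2 = K - D := by rw [lamS_succ, hlam1]
    have hlam2 : lam K D 2 = D % (K - D) := by
      rw [lam_succ (hlam 1 (by omega)), lamS_succ, hlam1]; rfl
    have := exists_reflTransGen_aboveLam (s := 2) (p := (K, K - D)) i
      ⟨by omega, hS2.symm, by rw [hlam2, hKmod]⟩ (by omega) (fun j hj => hlam j (by omega))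
    rwa [show 2 + 2 * i = 2 * (i + 1) by ring] at this

lemma le_ddown_of_mem_E {K D i k : ℕ} (hD : 0 < D) (hDK : D < K)
    (hlam : ∀ j ≤ 2 * i + 1, lam K D j ≠ 0)
    (hk1 : K - D - lamS K D (2 * i) + (beta K D (2 * i) - 1) * lam K D (2 * i) ≤ k)
    (hk2 : k < K - D - lam K D (2 * i + 1)) :
    D + lam K D (2 * i + 1) ≤ ddown K (K - D) k := by
  have hr : lam K D (2 * i) ≠ 0 := hlam _ (by omega)
  have hi : D < K - D ∨ 0 < i := by
    rcases i.eq_zero_or_pos with rfl | hi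
    · refine Or.inl (lt_of_not_ge fun hge => ?_)
      have h1 := lam_one_of_le hD hge (hlam 1 le_rfl)
      simp only [Nat.mul_zero, Nat.zero_add, h1] at hk2
      omega
    · exact Or.inr hi
  obtain ⟨⟨a, b⟩, hreach, hba, hb, hab⟩ :=
    exists_reflTransGen_aboveLam_two_mul hD hDK (fun j hj => hlam j (by omega)) hi
  dsimp only at hba hb hab
  have hbn : b ≤ K - D := (AirStep.le_of_reflTransGen hreach).2
  have hsmod : b % lam K D (2 * i) = lam K D (2 * i + 1) := by rw [hb, lam_succ hr]
  have hdiv := lamS_eq hr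
  rw [← hb] at hk1 hdiv
  have hrb : lam K D (2 * i) < b := hab ▸ Nat.mod_lt a (by omega)
  obtain ⟨β, hβ⟩ : ∃ β, beta K D (2 * i) = β + 1 :=
    Nat.exists_eq_add_one.mpr (Nat.pos_of_ne_zero fun h => by simp [h] at hdiv; omega)
  rw [hβ, Nat.add_sub_cancel] at hk1
  rw [hβ, Nat.succ_mul] at hdiv
  have hk' : k - (K - D - b) < b - b % (a % b) := by rw [hab, hsmod]; omega
  have hentry := airEntry_eq_true_of_reflTransGen hreach (by omega) hba hk'
  have hmod : (k - (K - D - b)) % lam K D (2 * i) = k - (K - D - b) - β * lam K D (2 * i) := by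
    conv_lhs => rw [show k - (K - D - b) = (k - (K - D - b) - β * lam K D (2 * i))
      + β * lam K D (2 * i) by omega]
    rw [Nat.add_mul_mod_self_right, Nat.mod_eq_of_lt (by omega)]
  rw [hab, hmod, show K - D - b + (k - (K - D - b)) = k by omega,
    show K - lam K D (2 * i) + (k - (K - D - b) - β * lam K D (2 * i))
      = k + (D + lam K D (2 * i + 1)) by omega] at hentry
  exact le_ddown (by omega) (by omega) hentry

theorem stmt18_general (K D l i k c d t : ℕ) (hD : 0 < D) (hDK : D < K)
    (hmin : ∀ j ≤ l, lam K D j ≠ 0)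
    (hi : 2 * i + 1 ≤ l)
    (hk1 : K - D - lamS K D (2 * i) + (beta K D (2 * i) - 1) * lam K D (2 * i) ≤ k)
    (hk2 : k < K - D - lam K D (2 * i + 1))
    (hkR : k % (K - D - lamS K D (2 * i)) =
      (beta K D (2 * i) - 1) * lam K D (2 * i) + c * lam K D (2 * i + 1) + d)
    (htK : k + ddown K (K - D) k + t < K) :
    t < (lam K D (2 * i) - c * lam K D (2 * i + 1)) - d := by
  have hdown := le_ddown_of_mem_E hD hDK (fun j hj => hmin j (by omega)) hk1 hk2
  have hdiv := lamS_eq (hmin (2 * i) (by omega))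
  have hkm : K - D - lamS K D (2 * i) + k % (K - D - lamS K D (2 * i)) ≤ k := by
    rw [Nat.mod_eq_sub_mod (by omega)]
    have := Nat.mod_le (k - (K - D - lamS K D (2 * i))) (K - D - lamS K D (2 * i))
    omega
  rw [hkR, Nat.sub_one_mul] at hkm
  omega

/-- For k ∈ E_i, every r-th down-distance t of L(k+d_down(k), k+μ_k) satisfies
t < μ_k − d (in particular t_{k,p_k} < μ_k − d). -/
theorem stmt18 (K D l i k c d t : ℕ) (hD : 0 < D) (hDK : D < K)
    (hl : lam K D (l + 1) = 0) (hmin : ∀ j ≤ l, lam K D j ≠ 0)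
    (hi : 2 * i + 1 ≤ l)
    (hk1 : K - D - lamS K D (2 * i) + (beta K D (2 * i) - 1) * lam K D (2 * i) ≤ k)
    (hk2 : k < K - D - lam K D (2 * i + 1))
    (hkR : k % (K - D - lamS K D (2 * i)) =
      (beta K D (2 * i) - 1) * lam K D (2 * i) + c * lam K D (2 * i + 1) + d)
    (hd : d < lam K D (2 * i + 1))
    (ht0 : 0 < t) (htK : k + ddown K (K - D) k + t < K)
    (hte : airEntry K (K - D) (k + ddown K (K - D) k + t)
      (k + (lam K D (2 * i) - c * lam K D (2 * i + 1))) = true) :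
    t < (lam K D (2 * i) - c * lam K D (2 * i + 1)) - d :=
  stmt18_general K D l i k c d t hD hDK hmin hi hk1 hk2 hkR htK
end
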